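/- arXiv:1309.3960 — 7 statements merged into one kernel-verified Lean document; each statement's English description precedes it below -/
import Mathlib

section
/- If an infinite word u over a finite alphabet A is C-balanced (i.e., for any two factors v, w of u of the same length and any letter i, ||v|_i - |w|_i| ≤ C), then every letter i has a uniform frequency f_i in u, and for every factor w of u and every letter i one has ||w|_i - f_i·|w|| ≤ C. -/
open Filter Topology

/-- The factor of the infinite word `u` of length `n` starting at position `k`. -/
def factorAt {A : Type*} (u : ℕ → A) (k n : ℕ) : List A :=
  (List.range n).map (fun j => u (k + j))

/-- `w` is a factor of the infinite word `u`. -/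
def IsFactor {A : Type*} (u : ℕ → A) (w : List A) : Prop :=
  ∃ k, w = factorAt u k w.length

/-!
For a letter `i`, let `φ n` and `ψ n` be the largest and the smallest number of occurrences of `i`
in a factor of length `n`. Cutting a factor of length `m + n` into factors of lengths `m` and `n`
shows that `φ` is subadditive and `ψ` superadditive, so by Fekete's lemma there is a slope `f`
with `ψ n ≤ f n ≤ φ n` for all `n`. Balance says `φ n - ψ n ≤ C`, and every factor count lies in
`[ψ n, φ n]` as well, which gives `||w|_i - f |w|| ≤ C`; dividing by `n` gives the frequency.
-/

theorem mul_le_apply_mul_of_subadditive_neg {ψ : ℕ → ℝ} (hψ : Subadditive (-ψ)) {k : ℕ}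
    (hk : 0 < k) (n : ℕ) : (k : ℝ) * ψ n ≤ ψ (k * n) := by
  obtain ⟨k, rfl⟩ : ∃ j, k = j + 1 := ⟨k - 1, by omega⟩
  have := hψ.apply_mul_add_le k n n
  simp only [Pi.neg_apply] at this
  push_cast
  rw [add_one_mul, add_one_mul]
  linarith

theorem exists_mul_between_of_subadditive {φ ψ : ℕ → ℝ} (hφ : Subadditive φ)
    (hψ : Subadditive (-ψ)) (hle : ψ ≤ φ) : ∃ f : ℝ, ∀ n : ℕ, ψ n ≤ f * n ∧ f * n ≤ φ n := by
  have hbdd : BddBelow (Set.range fun n => φ n / n) := by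
    refine ⟨min 0 (ψ 1), ?_⟩
    rintro _ ⟨_ | n, rfl⟩
    · simp
    · have hn : (0 : ℝ) < n + 1 := by positivity
      have hψn := mul_le_apply_mul_of_subadditive_neg hψ n.succ_pos 1
      rw [mul_one] at hψn
      push_cast at hψn ⊢
      rw [le_div_iff₀ hn]
      linarith [mul_le_mul_of_nonneg_right (min_le_right 0 (ψ 1)) hn.le, hle (n + 1)]
  refine ⟨hφ.lim, fun n => ?_⟩
  rcases Nat.eq_zero_or_pos n with rfl | hn
  · have hψ0 := hψ 0 0
    simp only [Pi.neg_apply] at hψ0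
    simpa using ⟨by linarith, by linarith [hφ 0 0]⟩
  have hn' : (0 : ℝ) < n := by exact_mod_cast hn
  refine ⟨?_, (le_div_iff₀ hn').1 (hφ.lim_le_div hbdd hn.ne')⟩
  -- `ψ n / n ≤ ψ (k n) / (k n) ≤ φ (k n) / (k n)`, and the right-hand side tends to the limit
  have hmul : Tendsto (fun k : ℕ => k * n) atTop atTop :=
    tendsto_id.atTop_mul_const' hn
  rw [← div_le_iff₀ hn']
  refine ge_of_tendsto ((hφ.tendsto_lim hbdd).comp hmul) ?_
  filter_upwards [eventually_gt_atTop 0] with k hk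
  have hk' : (0 : ℝ) < k := by exact_mod_cast hk
  calc ψ n / n = (k * ψ n) / (k * n) := (mul_div_mul_left _ _ hk'.ne').symm
    _ ≤ φ (k * n) / (k * n) := by gcongr; exact (mul_le_apply_mul_of_subadditive_neg hψ hk n).trans (hle _)
    _ = φ (k * n) / ↑(k * n) := by push_cast; rfl

theorem tendsto_div_of_abs_sub_mul_le {a : ℕ → ℝ} {f C : ℝ} (h : ∀ n, |a n - f * n| ≤ C) :
    Tendsto (fun n => a n / n) atTop (𝓝 f) := by
  rw [← tendsto_sub_nhds_zero_iff]
  refine squeeze_zero_norm' ?_ (tendsto_const_div_atTop_nhds_zero_nat C)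
  filter_upwards [eventually_gt_atTop 0] with n hn
  have hn' : (0 : ℝ) < n := by exact_mod_cast hn
  rw [Real.norm_eq_abs, div_sub' hn'.ne', abs_div, abs_of_pos hn']
  exact div_le_div_of_nonneg_right (by rw [mul_comm]; exact h n) hn'.le

section Words

variable {A : Type*} (u : ℕ → A)

theorem factorAt_length (k n : ℕ) : (factorAt u k n).length = n := by
  simp [factorAt]

theorem factorAt_add (k m n : ℕ) :
    factorAt u k (m + n) = factorAt u k m ++ factorAt u (k + m) n := by
  simp only [factorAt, List.range_add, List.map_append, List.map_map]
  congr 1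
  exact List.map_congr_left fun j _ => by simp [add_assoc]

theorem isFactor_factorAt (k n : ℕ) : IsFactor u (factorAt u k n) :=
  ⟨k, by rw [factorAt_length]⟩

variable [DecidableEq A] (i : A)

noncomputable def maxCount (n : ℕ) : ℝ := ⨆ k, ((factorAt u k n).count i : ℝ)

noncomputable def minCount (n : ℕ) : ℝ := ⨅ k, ((factorAt u k n).count i : ℝ)

theorem bddAbove_range_count (n : ℕ) :
    BddAbove (Set.range fun k => ((factorAt u k n).count i : ℝ)) := by
  refine ⟨n, ?_⟩
  rintro _ ⟨k, rfl⟩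
  show ((factorAt u k n).count i : ℝ) ≤ n
  exact_mod_cast (List.count_le_length (a := i)).trans_eq (factorAt_length u k n)

theorem bddBelow_range_count (n : ℕ) :
    BddBelow (Set.range fun k => ((factorAt u k n).count i : ℝ)) :=
  ⟨0, by rintro _ ⟨k, rfl⟩; positivity⟩

theorem count_le_maxCount (k n : ℕ) : ((factorAt u k n).count i : ℝ) ≤ maxCount u i n :=
  le_ciSup (bddAbove_range_count u i n) k

theorem minCount_le_count (k n : ℕ) : minCount u i n ≤ (factorAt u k n).count i :=
  ciInf_le (bddBelow_range_count u i n) k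

theorem minCount_le_maxCount : minCount u i ≤ maxCount u i := fun n =>
  (minCount_le_count u i 0 n).trans (count_le_maxCount u i 0 n)

theorem subadditive_maxCount : Subadditive (maxCount u i) := fun m n =>
  ciSup_le fun k => by
    rw [factorAt_add, List.count_append, Nat.cast_add]
    exact add_le_add (count_le_maxCount u i k m) (count_le_maxCount u i (k + m) n)

theorem subadditive_neg_minCount : Subadditive (-minCount u i) := fun m n => by
  simp only [Pi.neg_apply, ← neg_add, neg_le_neg_iff]
  refine le_ciInf fun k => ?_
  rw [factorAt_add, List.count_append, Nat.cast_add]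
  exact add_le_add (minCount_le_count u i k m) (minCount_le_count u i (k + m) n)

theorem maxCount_sub_minCount_le {C : ℝ}
    (hbal : ∀ k l n, |((factorAt u k n).count i : ℝ) - (factorAt u l n).count i| ≤ C) (n : ℕ) :
    maxCount u i n - minCount u i n ≤ C := by
  rw [sub_le_comm]
  refine le_ciInf fun l => ?_
  rw [sub_le_iff_le_add]
  refine ciSup_le fun k => ?_
  linarith [le_abs_self (((factorAt u k n).count i : ℝ) - (factorAt u l n).count i), hbal k l n]

end Words

theorem balanced_implies_frequencies_general {A : Type*} [DecidableEq A]
    (u : ℕ → A) (C : ℝ)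
    (hbal : ∀ v w : List A, IsFactor u v → IsFactor u w → v.length = w.length →
      ∀ i : A, |(v.count i : ℝ) - (w.count i : ℝ)| ≤ C) :
    ∀ i : A, ∃ f : ℝ,
      Tendsto (fun n => ((factorAt u 0 n).count i : ℝ) / n) atTop (𝓝 f) ∧
      ∀ w : List A, IsFactor u w → |(w.count i : ℝ) - f * w.length| ≤ C := by
  intro i
  obtain ⟨f, hf⟩ := exists_mul_between_of_subadditive (subadditive_maxCount u i)
    (subadditive_neg_minCount u i) (minCount_le_maxCount u i)
  have hgap := maxCount_sub_minCount_le u i fun k l n =>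
    hbal _ _ (isFactor_factorAt u k n) (isFactor_factorAt u l n)
      (by rw [factorAt_length, factorAt_length]) i
  have hfactor : ∀ k n, |((factorAt u k n).count i : ℝ) - f * n| ≤ C := fun k n =>
    abs_sub_le_iff.2
      ⟨by linarith [count_le_maxCount u i k n, (hf n).1, hgap n],
        by linarith [minCount_le_count u i k n, (hf n).2, hgap n]⟩
  refine ⟨f, tendsto_div_of_abs_sub_mul_le (hfactor 0), ?_⟩
  rintro w ⟨k, hk⟩
  rw [hk, factorAt_length]
  exact hfactor k w.length

/-- If an infinite word `u` over a finite alphabet is `C`-balanced, then every letter `i`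
has a (uniform) frequency `f i` in `u`, and for every factor `w` of `u` one has
`||w|_i - f i * |w|| ≤ C`. -/
theorem balanced_implies_frequencies {A : Type*} [Fintype A] [DecidableEq A]
    (u : ℕ → A) (C : ℝ)
    (hbal : ∀ v w : List A, IsFactor u v → IsFactor u w → v.length = w.length →
      ∀ i : A, |(v.count i : ℝ) - (w.count i : ℝ)| ≤ C) :
    ∀ i : A, ∃ f : ℝ,
      Tendsto (fun n => ((factorAt u 0 n).count i : ℝ) / n) atTop (𝓝 f) ∧
      ∀ w : List A, IsFactor u w → |(w.count i : ℝ) - f * w.length| ≤ C :=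
  balanced_implies_frequencies_general u C hbal
end

section
/- Let σ be a primitive substitution on a finite alphabet and X_σ its associated shift. Then X_σ is linearly recurrent: there exists a constant C such that the recurrence function of its language satisfies R(n) ≤ Cn for all n ≥ 1. -/
/-!
Replace `σ` by the power `f = σ^k`, in which every letter occurs in every image `f a`; the language
of `σ` is contained in that of `f`, so it suffices to treat `f`. For such `f` the lengths of
the blocks `f^s(a)` at a fixed level are comparable (within the factor `L = max |f a|`) and grow
geometrically, so every `n` has a level `s` whose blocks have lengths between `n` and `L² n`.
A word `w` of length `n` of the language then lies in the image under `f^s` of a word of length at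
most two, and all such words occur in every `f^Q(a)` for some fixed `Q`; hence `w` occurs in
every block `f^(s+Q)(a)`. A word of the language longer than twice the length of these blocks,
which is `O(n)`, contains a whole block, hence contains `w`.
-/

/-- The application of a substitution to a finite word. -/
def applyW {A : Type*} (σ : A → List A) (w : List A) : List A :=
  w.flatMap σ

/-- The language of a (primitive) substitution: the words occurring as factors of some
image `σ^m(i)` of a letter. -/
def substLanguage {A : Type*} (σ : A → List A) : Set (List A) :=
  {w | ∃ (m : ℕ) (i : A), w <:+: (applyW σ)^[m] [i]}

open Filter

variable {A : Type*} {f : A → List A}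

@[simp]
theorem applyW_nil (f : A → List A) : applyW f [] = [] := rfl

theorem applyW_cons (f : A → List A) (a : A) (u : List A) :
    applyW f (a :: u) = f a ++ applyW f u := rfl

theorem applyW_append (f : A → List A) (u v : List A) :
    applyW f (u ++ v) = applyW f u ++ applyW f v :=
  List.flatMap_append

theorem applyW_singleton (f : A → List A) (a : A) : applyW f [a] = f a :=
  List.flatMap_singleton f a

theorem applyW_infix_applyW (f : A → List A) {u v : List A} (h : u <:+: v) :
    applyW f u <:+: applyW f v := by
  obtain ⟨s, t, rfl⟩ := h
  exact ⟨applyW f s, applyW f t, by rw [applyW_append, applyW_append]⟩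

theorem infix_applyW_of_mem (f : A → List A) {a : A} {u : List A} (h : a ∈ u) :
    f a <:+: applyW f u := by
  obtain ⟨s, t, rfl⟩ := List.append_of_mem h
  rw [applyW_append, applyW_cons]
  exact List.infix_append' _ _ _

theorem length_applyW_le {B : ℕ} (hB : ∀ a, (f a).length ≤ B) (u : List A) :
    (applyW f u).length ≤ B * u.length := by
  induction u with
  | nil => simp
  | cons a u ih =>
    rw [applyW_cons, List.length_append, List.length_cons, Nat.mul_succ]
    have := hB a
    omega

theorem le_length_applyW {b : ℕ} (hb : ∀ a, b ≤ (f a).length) (u : List A) :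
    b * u.length ≤ (applyW f u).length := by
  induction u with
  | nil => simp
  | cons a u ih =>
    rw [applyW_cons, List.length_append, List.length_cons, Nat.mul_succ]
    have := hb a
    omega

theorem exists_infix_length_le_two_of_infix_applyW {w : List A}
    (hw : ∀ a, w.length ≤ (f a).length) :
    ∀ {u : List A}, w <:+: applyW f u →
      ∃ u', u' <:+: u ∧ u'.length ≤ 2 ∧ w <:+: applyW f u'
  | [], h => ⟨[], List.nil_infix, by simp, h⟩
  | a :: u, h => by
    rw [applyW_cons, List.infix_append_iff] at h
    rcases h with h | h | ⟨w₁, w₂, rfl, h₁, h₂⟩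
    · exact ⟨[a], List.infix_append_left, by simp, by rwa [applyW_singleton]⟩
    · obtain ⟨u', hu', hlen, hw'⟩ := exists_infix_length_le_two_of_infix_applyW hw h
      exact ⟨u', List.infix_cons hu', hlen, hw'⟩
    · cases u with
      | nil =>
        rw [applyW_nil, List.prefix_nil] at h₂
        subst h₂
        exact ⟨[a], List.infix_append_left, by simp,
          by simpa [applyW_singleton] using h₁.isInfix⟩
      | cons b u =>
        rw [applyW_cons] at h₂
        have hb : w₂ <+: f b := List.prefix_of_prefix_length_le h₂ (List.prefix_append _ _)
          (by have := hw b; rw [List.length_append] at this; omega)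
        refine ⟨[a, b], (List.prefix_append [a, b] u).isInfix, by simp, ?_⟩
        rw [show [a, b] = [a] ++ [b] from rfl, applyW_append, applyW_singleton,
          applyW_singleton]
        exact List.infix_append_iff.2 (Or.inr (Or.inr ⟨w₁, w₂, rfl, h₁, hb⟩))

theorem exists_mem_infix_of_infix_applyW {B : ℕ} (hB : ∀ a, (f a).length ≤ B) {v : List A}
    (hv : 2 * B < v.length) : ∀ {u : List A}, v <:+: applyW f u → ∃ a ∈ u, f a <:+: v
  | [], h => by simp [List.eq_nil_of_infix_nil h] at hv
  | a :: u, h => by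
    rw [applyW_cons, List.infix_append_iff] at h
    rcases h with h | h | ⟨v₁, v₂, rfl, h₁, h₂⟩
    · have := h.length_le
      have := hB a
      omega
    · obtain ⟨b, hb, hbv⟩ := exists_mem_infix_of_infix_applyW hB hv h
      exact ⟨b, List.mem_cons_of_mem a hb, hbv⟩
    · have hv₂ : B < v₂.length := by
        have := h₁.length_le
        have := hB a
        rw [List.length_append] at hv
        omega
      cases u with
      | nil => simp_all
      | cons b u =>
        rw [applyW_cons] at h₂
        have hb : f b <+: v₂ := List.prefix_of_prefix_length_le (List.prefix_append _ _) h₂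
          ((hB b).trans hv₂.le)
        exact ⟨b, by simp, hb.isInfix.trans List.infix_append_right⟩

def substPow (f : A → List A) (p : ℕ) (a : A) : List A :=
  (applyW f)^[p] [a]

@[simp]
theorem substPow_zero (f : A → List A) (a : A) : substPow f 0 a = [a] := rfl

theorem substPow_one (f : A → List A) (a : A) : substPow f 1 a = f a :=
  applyW_singleton f a

theorem iterate_applyW (f : A → List A) (p : ℕ) (u : List A) :
    (applyW f)^[p] u = applyW (substPow f p) u := by
  induction p generalizing u with
  | zero => exact (List.flatMap_singleton' u).symm
  | succ p ih =>
    rw [Function.iterate_succ_apply, ih]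
    refine (List.flatMap_assoc ..).trans (congrArg u.flatMap (funext fun a => ?_))
    rw [substPow, Function.iterate_succ_apply, applyW_singleton, ih]
    rfl

theorem substPow_add (f : A → List A) (p q : ℕ) (a : A) :
    substPow f (p + q) a = applyW (substPow f p) (substPow f q a) := by
  rw [substPow, Function.iterate_add_apply, iterate_applyW]
  rfl

theorem substPow_succ (f : A → List A) (p : ℕ) (a : A) :
    substPow f (p + 1) a = applyW (substPow f p) (f a) := by
  rw [substPow_add, substPow_one]

theorem substPow_substPow (f : A → List A) (k p : ℕ) (a : A) :
    substPow (substPow f k) p a = substPow f (k * p) a := by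
  have h : applyW (substPow f k) = (applyW f)^[k] :=
    funext fun u => (iterate_applyW f k u).symm
  rw [substPow, substPow, h, Function.iterate_mul]

theorem pow_le_length_substPow {b : ℕ} (hb : ∀ a, b ≤ (f a).length) (p : ℕ) (a : A) :
    b ^ p ≤ (substPow f p a).length := by
  induction p generalizing a with
  | zero => simp
  | succ p ih =>
    rw [substPow_succ, pow_succ]
    exact (Nat.mul_le_mul_left _ (hb a)).trans (le_length_applyW ih (f a))

theorem substPow_ne_nil (hne : ∀ a, f a ≠ []) (p : ℕ) (a : A) : substPow f p a ≠ [] := by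
  rw [← List.length_pos_iff]
  exact (one_pow p).symm.trans_le
    (pow_le_length_substPow (fun a => List.length_pos_iff.2 (hne a)) p a)

theorem substLanguage_subset_substLanguage_substPow (hne : ∀ a, f a ≠ []) {k : ℕ}
    (hk0 : k ≠ 0) (hk : ∀ i j, i ∈ substPow f k j) :
    substLanguage f ⊆ substLanguage (substPow f k) := by
  rintro w ⟨m, i, hw⟩
  refine ⟨m + 1, i, ?_⟩
  obtain ⟨x, hx⟩ := List.exists_mem_of_ne_nil _ (substPow_ne_nil hne (k * m - m) i)
  have hi : i ∈ substPow f (k + (k * m - m)) i := by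
    rw [substPow_add]
    exact (infix_applyW_of_mem _ hx).subset (hk i x)
  have hkm : k * (m + 1) = m + (k + (k * m - m)) := by
    have := Nat.le_mul_of_pos_left m (Nat.pos_of_ne_zero hk0)
    rw [Nat.mul_succ]
    omega
  show w <:+: substPow (substPow f k) (m + 1) i
  rw [substPow_substPow, hkm, substPow_add]
  exact hw.trans (infix_applyW_of_mem (substPow f m) hi)

theorem two_le_length_of_forall_mem [Nontrivial A] {l : List A} (h : ∀ a, a ∈ l) :
    2 ≤ l.length := by
  classical
  obtain ⟨a, b, hab⟩ := exists_pair_ne A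
  calc 2 = ({a, b} : Finset A).card := (Finset.card_pair hab).symm
    _ ≤ l.toFinset.card := Finset.card_le_card fun x _ => List.mem_toFinset.2 (h x)
    _ ≤ l.length := List.toFinset_card_le l

theorem mem_substPow_succ (hpos : ∀ i j, i ∈ f j) (q : ℕ) (i j : A) :
    i ∈ substPow f (q + 1) j := by
  induction q with
  | zero => simpa only [zero_add, substPow_one] using hpos i j
  | succ q ih =>
    rw [substPow_succ]
    exact (infix_applyW_of_mem _ (hpos j j)).subset ih

theorem eventually_infix_substPow (hpos : ∀ i j, i ∈ f j) {w : List A}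
    (hw : w ∈ substLanguage f) : ∀ᶠ q in atTop, ∀ j, w <:+: substPow f q j := by
  obtain ⟨m, i, hw⟩ := hw
  refine eventually_atTop.2 ⟨m + 1, fun q hq j => ?_⟩
  obtain ⟨r, rfl⟩ := Nat.exists_eq_add_of_le hq
  rw [show m + 1 + r = m + (r + 1) by omega, substPow_add]
  exact hw.trans (infix_applyW_of_mem (substPow f m) (mem_substPow_succ hpos r i j))

theorem exists_infix_applyW_substPow (hpos : ∀ i j, i ∈ f j) {w : List A}
    (hw : w ∈ substLanguage f) (s : ℕ) :
    ∃ N j, w <:+: applyW (substPow f s) (substPow f N j) := by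
  obtain ⟨N, hN⟩ := eventually_atTop.1 (eventually_infix_substPow hpos hw)
  obtain ⟨-, j, -⟩ := hw
  exact ⟨N, j, substPow_add f s N j ▸ hN (s + N) (by omega) j⟩

theorem exists_forall_infix_substPow [Finite A] (hpos : ∀ i j, i ∈ f j) (K : ℕ) :
    ∃ Q, ∀ u ∈ substLanguage f, u.length ≤ K → ∀ j, u <:+: substPow f Q j := by
  have hfin : {u | u ∈ substLanguage f ∧ u.length ≤ K}.Finite :=
    (List.finite_length_le A K).subset fun _ hu => hu.2
  obtain ⟨Q, hQ⟩ :=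
    ((eventually_all_finite hfin).2 fun _ hu => eventually_infix_substPow hpos hu.1).exists
  exact ⟨Q, fun u hu hK => hQ u ⟨hu, hK⟩⟩

theorem length_substPow_le_mul (hpos : ∀ i j, i ∈ f j) {L : ℕ}
    (hL : ∀ a, (f a).length ≤ L) (p : ℕ) (i j : A) :
    (substPow f p i).length ≤ L * (substPow f p j).length := by
  cases p with
  | zero =>
    simp only [substPow_zero, List.length_singleton, mul_one]
    exact (List.length_pos_of_mem (hpos i i)).trans_le (hL i)
  | succ p =>
    have hblock : ∀ a, (substPow f p a).length ≤ (substPow f (p + 1) j).length := fun a => by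
      rw [substPow_succ]
      exact (infix_applyW_of_mem _ (hpos a j)).length_le
    calc (substPow f (p + 1) i).length
        ≤ (substPow f (p + 1) j).length * (f i).length := by
          rw [substPow_succ]
          exact length_applyW_le hblock _
      _ ≤ L * (substPow f (p + 1) j).length := by rw [mul_comm]; gcongr; exact hL i

theorem exists_le_length_substPow_le [Nontrivial A] (hpos : ∀ i j, i ∈ f j) {L : ℕ}
    (hL : ∀ a, (f a).length ≤ L) {n : ℕ} (hn : 1 ≤ n) :
    ∃ s, ∀ a, n ≤ (substPow f s a).length ∧ (substPow f s a).length ≤ L ^ 2 * n := by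
  classical
  have h2 : ∀ a, 2 ≤ (f a).length := fun a => two_le_length_of_forall_mem (hpos · a)
  have hex : ∃ s, ∀ a, n ≤ (substPow f s a).length :=
    ⟨n, fun a => n.lt_two_pow_self.le.trans (pow_le_length_substPow h2 n a)⟩
  refine ⟨Nat.find hex, fun a => ⟨Nat.find_spec hex a, ?_⟩⟩
  rcases hs : Nat.find hex with _ | s
  · have := (h2 a).trans (hL a)
    simp only [substPow_zero, List.length_singleton]
    nlinarith
  · obtain ⟨i, hi⟩ : ∃ i, (substPow f s i).length < n := by
      simpa using Nat.find_min hex (hs ▸ s.lt_succ_self)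
    calc (substPow f (s + 1) a).length
        ≤ L * (substPow f s i).length * (f a).length := by
          rw [substPow_succ]
          exact length_applyW_le (fun b => length_substPow_le_mul hpos hL s b i) _
      _ ≤ L * n * L := Nat.mul_le_mul (Nat.mul_le_mul_left L hi.le) (hL a)
      _ = L ^ 2 * n := by ring

theorem infix_substPow_add_of_mem_substLanguage (hpos : ∀ i j, i ∈ f j) {Q s : ℕ}
    (hQ : ∀ u ∈ substLanguage f, u.length ≤ 2 → ∀ j, u <:+: substPow f Q j)
    {w : List A} (hw : w ∈ substLanguage f) (hs : ∀ a, w.length ≤ (substPow f s a).length)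
    (j : A) : w <:+: substPow f (s + Q) j := by
  obtain ⟨N, i, hwN⟩ := exists_infix_applyW_substPow hpos hw s
  obtain ⟨u, hu, hulen, hwu⟩ := exists_infix_length_le_two_of_infix_applyW hs hwN
  rw [substPow_add]
  exact hwu.trans (applyW_infix_applyW _ (hQ u ⟨N, i, hu⟩ hulen j))

def IsLinearlyRecurrent (S : Set (List A)) : Prop :=
  ∃ C : ℕ, 0 < C ∧ ∀ n, 1 ≤ n →
    ∀ v ∈ S, C * n ≤ v.length → ∀ w ∈ S, w.length = n → w <:+: v

theorem IsLinearlyRecurrent.mono {S T : Set (List A)} (hT : IsLinearlyRecurrent T)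
    (hST : S ⊆ T) : IsLinearlyRecurrent S := by
  obtain ⟨C, hC, h⟩ := hT
  exact ⟨C, hC, fun n hn v hv hvn w hw hwn => h n hn v (hST hv) hvn w (hST hw) hwn⟩

theorem isLinearlyRecurrent_of_subsingleton [Subsingleton A] (S : Set (List A)) :
    IsLinearlyRecurrent S := by
  refine ⟨1, one_pos, fun n _ v _ hvn w _ hwn => ?_⟩
  have hw : w = v.take n :=
    List.ext_getElem (by rw [List.length_take]; omega) fun _ _ _ => Subsingleton.elim _ _
  exact hw ▸ (List.take_prefix n v).isInfix

theorem isLinearlyRecurrent_substLanguage [Finite A] [Nontrivial A] (hpos : ∀ i j, i ∈ f j) :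
    IsLinearlyRecurrent (substLanguage f) := by
  obtain ⟨L, hL⟩ := Finite.exists_le fun a => (f a).length
  obtain ⟨Q, hQ⟩ := exists_forall_infix_substPow hpos 2
  obtain ⟨M, hM⟩ := Finite.exists_le fun a => (substPow f Q a).length
  refine ⟨2 * (L ^ 2 * M) + 1, Nat.succ_pos _, fun n hn v hv hvn w hw hwn => ?_⟩
  obtain ⟨s, hs⟩ := exists_le_length_substPow_le hpos hL hn
  have hblock : ∀ a, (substPow f (s + Q) a).length ≤ L ^ 2 * M * n := fun a => by
    rw [substPow_add]
    calc _ ≤ L ^ 2 * n * (substPow f Q a).length := length_applyW_le (fun b => (hs b).2) _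
      _ ≤ L ^ 2 * M * n := by rw [mul_right_comm]; gcongr; exact hM a
  obtain ⟨N, i, hvN⟩ := exists_infix_applyW_substPow hpos hv (s + Q)
  obtain ⟨j, -, hj⟩ := exists_mem_infix_of_infix_applyW hblock (by nlinarith) hvN
  exact (infix_substPow_add_of_mem_substLanguage hpos hQ hw (fun a => hwn ▸ (hs a).1) j).trans hj

/-- A primitive substitution is linearly recurrent: there is a constant `C` such that every
word of the language of length at least `C·n` contains every word of the language of
length `n` as a factor (i.e. the recurrence function satisfies `R(n) ≤ C·n`). -/
theorem primitive_substitution_linearly_recurrent (d : ℕ)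
    (σ : Fin d → List (Fin d)) (hne : ∀ b, σ b ≠ [])
    (hprim : ∃ k : ℕ, ∀ i j : Fin d, i ∈ (applyW σ)^[k] [j]) :
    ∃ C : ℕ, 0 < C ∧ ∀ n, 1 ≤ n →
      ∀ v ∈ substLanguage σ, C * n ≤ v.length →
        ∀ w ∈ substLanguage σ, w.length = n → w <:+: v := by
  obtain ⟨k, hk⟩ := hprim
  rcases subsingleton_or_nontrivial (Fin d) with _ | _
  · exact isLinearlyRecurrent_of_subsingleton _
  have hk0 : k ≠ 0 := by
    rintro rfl
    obtain ⟨a, b, hab⟩ := exists_pair_ne (Fin d)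
    exact hab (List.mem_singleton.1 (hk a b))
  exact (isLinearlyRecurrent_substLanguage hk).mono
    (substLanguage_subset_substLanguage_substPow hne hk0 hk)
end

section
/- Consider the infinite word u = 0 1 00 11 000 111 0000 1111 ⋯ over {0,1} obtained by concatenating 0^k 1^k for k = 1, 2, 3, …. Then the factor complexity of u satisfies p_u(n) = n(n+1)/2 + 1 for all n ≥ 0. -/
/-- The infinite word `0 1 00 11 000 111 0000 1111 ⋯` obtained by concatenating the
blocks `0^k 1^k` for `k = 1, 2, 3, …` (`false` plays the role of `0`). -/
def zeroOneBlocksWord (n : ℕ) : Bool :=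
  ((List.range (n + 1)).flatMap
    (fun k => List.replicate (k + 1) false ++ List.replicate (k + 1) true)).getD n false

/-!
Block `m` of the word is `0^(m+1) 1^(m+1)` and starts at `blockStart m = m (m + 1)`, so run
lengths never decrease. A factor of length `n` meeting at most two runs is one of the `n + 1` words
`0^i 1^(n-i)` or the `n - 1` words `1^j 0^(n-j)` with `0 < j < n`, and all of them occur in
block `n`. Any other factor reads `c^x (¬c)^y c ⋯` with a complete middle run of length `y`, and
`x ≤ y` if `c = 0`, `x < y` if `c = 1`. Hence `{a, b} = {x - 1, y - 1}` with `a ≤ b ↔ c = 0` is a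
pair with `a + b + 3 ≤ n`; conversely each such pair is realised by the factor starting at
`pairStart a b`, and the factor determines `c`, `x`, `y`, so there are `(n - 1)(n - 2) / 2` of
these. The three kinds are told apart by monotonicity: sorted, reverse sorted but not sorted,
neither.
-/

section factorAt

variable {A : Type*} (u : ℕ → A)

@[simp]
lemma length_factorAt (s n : ℕ) : (factorAt u s n).length = n := by
  simp [factorAt]

lemma factorAt_add_s10 (s a b : ℕ) :
    factorAt u s (a + b) = factorAt u s a ++ factorAt u (s + a) b := by
  simp [factorAt, List.range_add, Function.comp_def, Nat.add_assoc]

lemma factorAt_add_add (s a b c : ℕ) :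
    factorAt u s (a + b + c) =
      factorAt u s a ++ factorAt u (s + a) b ++ factorAt u (s + a + b) c := by
  rw [factorAt_add_s10, factorAt_add_s10, Nat.add_assoc s]

lemma factorAt_succ (s n : ℕ) : factorAt u s (n + 1) = u s :: factorAt u (s + 1) n := by
  simp [factorAt, List.range_succ_eq_map, Function.comp_def, Nat.add_assoc, Nat.add_comm 1]

variable {u}

lemma factorAt_eq_replicate {s n : ℕ} {c : A} (h : ∀ i < n, u (s + i) = c) :
    factorAt u s n = List.replicate n c := by
  simpa [factorAt, List.eq_replicate_iff] using h

lemma factorAt_eq_replicate_append_replicate {s x n : ℕ} {c d : A}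
    (hc : ∀ i < min x n, u (s + i) = c) (hd : ∀ i < n, x ≤ i → u (s + i) = d) :
    factorAt u s n = List.replicate (min x n) c ++ List.replicate (n - min x n) d := by
  conv_lhs => rw [← Nat.add_sub_cancel' (min_le_right x n)]
  rw [factorAt_add_s10, factorAt_eq_replicate hc, factorAt_eq_replicate]
  intro i hi
  rw [Nat.add_assoc]
  exact hd _ (by omega) (by omega)

end factorAt

namespace List

variable {A : Type*} {c d : A}

lemma replicate_append_cons_inj (hcd : c ≠ d) {i j : ℕ} {X Y : List A}
    (h : replicate i c ++ d :: X = replicate j c ++ d :: Y) : i = j ∧ X = Y := by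
  induction i generalizing j with
  | zero => cases j <;> simp_all [replicate_succ, eq_comm]
  | succ i ih =>
    cases j with
    | zero => simp_all [replicate_succ]
    | succ j => simpa using ih (by simpa [replicate_succ] using h)

lemma replicate_append_replicate_append_cons_inj (hcd : c ≠ d) {x y x' y' : ℕ} {X Y : List A}
    (h : replicate x c ++ replicate (y + 1) d ++ c :: X =
      replicate x' c ++ replicate (y' + 1) d ++ c :: Y) :
    x = x' ∧ y = y' ∧ X = Y := by
  simp only [replicate_succ, append_assoc, cons_append] at h
  obtain ⟨rfl, htail⟩ := replicate_append_cons_inj hcd h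
  obtain ⟨rfl, rfl⟩ := replicate_append_cons_inj hcd.symm htail
  simp

end List

namespace ZeroOneBlocksWord

open Finset.HasAntidiagonal

def blockStart (m : ℕ) : ℕ := m * (m + 1)

lemma blockStart_succ (m : ℕ) : blockStart (m + 1) = blockStart m + 2 * (m + 1) := by
  unfold blockStart; ring

lemma le_blockStart (m : ℕ) : m ≤ blockStart m := Nat.le_mul_of_pos_right m m.succ_pos

def blocks (N : ℕ) : List Bool :=
  (List.range N).flatMap fun k => List.replicate (k + 1) false ++ List.replicate (k + 1) true

lemma blocks_succ (N : ℕ) :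
    blocks (N + 1) = blocks N ++ (List.replicate (N + 1) false ++ List.replicate (N + 1) true) := by
  simp [blocks, List.range_succ]

lemma length_blocks (N : ℕ) : (blocks N).length = blockStart N := by
  induction N with
  | zero => rfl
  | succ N ih => rw [blocks_succ, blockStart_succ]; simp [ih]; ring

lemma blocks_prefix {M N : ℕ} (h : M ≤ N) : blocks M <+: blocks N := by
  induction N, h using Nat.le_induction with
  | base => exact List.prefix_refl _
  | succ N _ ih => exact ih.trans (blocks_succ N ▸ List.prefix_append _ _)

lemma apply_blockStart_add {m d : ℕ} (hd : d < 2 * (m + 1)) :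
    zeroOneBlocksWord (blockStart m + d) = decide (m + 1 ≤ d) := by
  have hlt : blockStart m + d < (blocks (m + 1)).length := by
    rw [length_blocks, blockStart_succ]; omega
  have hpre : blocks (m + 1) <+: blocks (blockStart m + d + 1) :=
    blocks_prefix (by have := le_blockStart m; omega)
  change (blocks _).getD _ false = _
  rw [List.getD_eq_getElem _ _ (hlt.trans_le hpre.length_le), ← hpre.getElem hlt]
  simp only [blocks_succ, List.getElem_append, length_blocks, List.length_replicate,
    List.getElem_replicate]
  split_ifs <;> simp <;> omega

lemma exists_blockStart_le_lt (s : ℕ) : ∃ m, blockStart m ≤ s ∧ s < blockStart (m + 1) := by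
  induction s with
  | zero => exact ⟨0, le_rfl, by simp [blockStart]⟩
  | succ s ih =>
    obtain ⟨m, h₁, h₂⟩ := ih
    by_cases h : s + 1 < blockStart (m + 1)
    · exact ⟨m, by omega, h⟩
    · exact ⟨m + 1, by omega, by rw [blockStart_succ (m + 1)]; omega⟩

lemma apply_eq_false {m s : ℕ} (h₁ : blockStart m ≤ s) (h₂ : s < blockStart m + (m + 1)) :
    zeroOneBlocksWord s = false := by
  obtain ⟨d, rfl⟩ := Nat.exists_eq_add_of_le h₁
  rw [apply_blockStart_add (by omega)]
  simpa using h₂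

lemma apply_eq_true {m s : ℕ} (h₁ : blockStart m + (m + 1) ≤ s)
    (h₂ : s < blockStart (m + 1)) : zeroOneBlocksWord s = true := by
  obtain ⟨d, rfl⟩ := Nat.exists_eq_add_of_le (le_of_add_le_left h₁)
  rw [blockStart_succ] at h₂
  rw [apply_blockStart_add (by omega)]
  simpa using h₁

def monotoneWords (n : ℕ) : Finset (List Bool) :=
  (Finset.range (n + 1)).image fun i => List.replicate i false ++ List.replicate (n - i) true

def antitoneWords (n : ℕ) : Finset (List Bool) :=
  (Finset.Icc 1 (n - 1)).image fun j => List.replicate j true ++ List.replicate (n - j) false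

-- `a + 1` letters before the end of the zero run of block `b` if `a ≤ b`, and `b + 1` letters
-- before the end of the one run of block `a - 1` otherwise.
def pairStart (a b : ℕ) : ℕ :=
  if a ≤ b then blockStart b + (b - a) else blockStart a - (b + 1)

def pairs (n : ℕ) : Finset (ℕ × ℕ) := (Finset.range (n - 2)).biUnion antidiagonal

def longFactors (n : ℕ) : Finset (List Bool) :=
  (pairs n).image fun p => factorAt zeroOneBlocksWord (pairStart p.1 p.2) n

def factorSet (n : ℕ) : Finset (List Bool) :=
  monotoneWords n ∪ antitoneWords n ∪ longFactors n

lemma mem_pairs {n : ℕ} {p : ℕ × ℕ} : p ∈ pairs n ↔ p.1 + p.2 + 3 ≤ n := by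
  simp only [pairs, Finset.mem_biUnion, Finset.mem_range, mem_antidiagonal]
  exact ⟨fun ⟨k, hk, h⟩ => by omega, fun h => ⟨_, by omega, rfl⟩⟩

lemma card_pairs (n : ℕ) : (pairs n).card = ∑ k ∈ Finset.range (n - 2), (k + 1) := by
  rw [pairs, Finset.card_biUnion]
  · simp
  · intro k _ l _ hkl
    simp only [Function.onFun, Finset.disjoint_left, mem_antidiagonal]
    omega

lemma replicate_append_replicate_mem_union {k n : ℕ} (c : Bool) (hk : k ≤ n) :
    List.replicate k c ++ List.replicate (n - k) (!c) ∈ monotoneWords n ∪ antitoneWords n := by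
  simp only [Finset.mem_union, monotoneWords, antitoneWords, Finset.mem_image, Finset.mem_range,
    Finset.mem_Icc]
  cases c
  · exact Or.inl ⟨k, by omega, rfl⟩
  · rcases Nat.eq_zero_or_pos k with rfl | hk₀
    · exact Or.inl ⟨n, by omega, by simp⟩
    rcases hk.eq_or_lt with rfl | hkn
    · exact Or.inl ⟨0, by omega, by simp⟩
    · exact Or.inr ⟨k, by omega, rfl⟩

lemma factorAt_mem_monotoneWords_union_antitoneWords {u : ℕ → Bool} {s x ℓ n : ℕ} {c : Bool}
    (hc : ∀ i < x, u (s + i) = c) (hd : ∀ i, x ≤ i → i < x + ℓ → u (s + i) = !c)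
    (hn : n ≤ x + ℓ) : factorAt u s n ∈ monotoneWords n ∪ antitoneWords n := by
  rw [factorAt_eq_replicate_append_replicate (fun i hi => hc i (lt_min_iff.1 hi).1)
    (fun i hi hxi => hd i hxi (by omega))]
  exact replicate_append_replicate_mem_union c (min_le_right x n)

lemma factorAt_mem_factorSet (s n : ℕ) : factorAt zeroOneBlocksWord s n ∈ factorSet n := by
  obtain ⟨m, hm₁, hm₂⟩ := exists_blockStart_le_lt s
  have hm := blockStart_succ m
  have hm' := blockStart_succ (m + 1)
  by_cases hzero : s < blockStart m + (m + 1)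
  · by_cases hn : n ≤ blockStart m + (m + 1) - s + (m + 1)
    · refine Finset.mem_union_left _
        (factorAt_mem_monotoneWords_union_antitoneWords (c := false) ?_ ?_ hn)
      · exact fun i hi => apply_eq_false (m := m) (by omega) (by omega)
      · exact fun i hi hi' => apply_eq_true (m := m) (by omega) (by omega)
    · refine Finset.mem_union_right _ (Finset.mem_image.2 ⟨(m - (s - blockStart m), m),
        mem_pairs.2 (by dsimp only; omega), ?_⟩)
      simp only [pairStart, if_pos (show m - (s - blockStart m) ≤ m by omega)]
      congr 1
      omega
  · by_cases hn : n ≤ blockStart (m + 1) - s + (m + 2)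
    · refine Finset.mem_union_left _
        (factorAt_mem_monotoneWords_union_antitoneWords (c := true) ?_ ?_ hn)
      · exact fun i hi => apply_eq_true (m := m) (by omega) (by omega)
      · exact fun i hi hi' => apply_eq_false (m := m + 1) (by omega) (by omega)
    · refine Finset.mem_union_right _ (Finset.mem_image.2 ⟨(m + 1, blockStart (m + 1) - s - 1),
        mem_pairs.2 (by dsimp only; omega), ?_⟩)
      simp only [pairStart, if_neg (show ¬ m + 1 ≤ blockStart (m + 1) - s - 1 by omega)]
      congr 1
      omega

lemma factorAt_pairStart_of_le {a b n : ℕ} (hab : a ≤ b) (hn : a + b + 3 ≤ n) :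
    factorAt zeroOneBlocksWord (pairStart a b) n =
      List.replicate (a + 1) false ++ List.replicate (b + 1) true ++
        false :: factorAt zeroOneBlocksWord (blockStart (b + 1) + 1) (n - (a + b + 3)) := by
  obtain ⟨k, rfl⟩ := Nat.exists_eq_add_of_le hn
  have hb := blockStart_succ b
  have hs : pairStart a b = blockStart b + (b - a) := if_pos hab
  have hend : blockStart b + (b - a) + (a + 1) + (b + 1) = blockStart (b + 1) := by omega
  rw [Nat.add_sub_cancel_left, show a + b + 3 + k = a + 1 + (b + 1) + (k + 1) by omega,
    factorAt_add_add, hs, hend,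
    factorAt_succ _ (blockStart (b + 1)), apply_eq_false (m := b + 1) le_rfl (by omega),
    factorAt_eq_replicate fun i hi => apply_eq_false (m := b) (by omega) (by omega),
    factorAt_eq_replicate fun i hi => apply_eq_true (m := b) (by omega) (by omega)]

lemma factorAt_pairStart_of_lt {a b n : ℕ} (hab : b < a) (hn : a + b + 3 ≤ n) :
    factorAt zeroOneBlocksWord (pairStart a b) n =
      List.replicate (b + 1) true ++ List.replicate (a + 1) false ++
        true :: factorAt zeroOneBlocksWord (blockStart a + (a + 1) + 1) (n - (a + b + 3)) := by
  obtain ⟨k, rfl⟩ := Nat.exists_eq_add_of_le hn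
  obtain ⟨a, rfl⟩ : ∃ a', a = a' + 1 := ⟨a - 1, by omega⟩
  have ha := blockStart_succ a
  have ha' := blockStart_succ (a + 1)
  have hs : pairStart (a + 1) b = blockStart (a + 1) - (b + 1) := if_neg (by omega)
  have hend : blockStart (a + 1) - (b + 1) + (b + 1) + (a + 1 + 1) =
      blockStart (a + 1) + (a + 1 + 1) := by omega
  rw [Nat.add_sub_cancel_left, show a + 1 + b + 3 + k = b + 1 + (a + 1 + 1) + (k + 1) by omega,
    factorAt_add_add, hs, hend,
    factorAt_succ _ (blockStart (a + 1) + _), apply_eq_true (m := a + 1) le_rfl (by omega),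
    factorAt_eq_replicate fun i hi => apply_eq_true (m := a) (by omega) (by omega),
    factorAt_eq_replicate fun i hi => apply_eq_false (m := a + 1) (by omega) (by omega)]

lemma exists_eq_of_mem_longFactors {n : ℕ} {w : List Bool} (hw : w ∈ longFactors n) :
    ∃ c x y t, w = List.replicate (x + 1) c ++ List.replicate (y + 1) (!c) ++ c :: t := by
  obtain ⟨⟨a, b⟩, hab, rfl⟩ := Finset.mem_image.1 hw
  rw [mem_pairs] at hab
  rcases le_or_gt a b with h | h
  · exact ⟨false, a, b, _, factorAt_pairStart_of_le h hab⟩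
  · exact ⟨true, b, a, _, factorAt_pairStart_of_lt h hab⟩

lemma not_pairwise_of_mem_longFactors {n : ℕ} {w : List Bool} (hw : w ∈ longFactors n) :
    ¬ w.Pairwise (· ≤ ·) ∧ ¬ w.Pairwise (· ≥ ·) := by
  obtain ⟨c, x, y, t, rfl⟩ := exists_eq_of_mem_longFactors hw
  cases c <;> simp [List.pairwise_append, List.replicate_succ]

lemma pairwise_le_of_mem_monotoneWords {n : ℕ} {w : List Bool} (hw : w ∈ monotoneWords n) :
    w.Pairwise (· ≤ ·) := by
  obtain ⟨i, -, rfl⟩ := Finset.mem_image.1 hw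
  simp [List.pairwise_append, List.pairwise_replicate]

lemma pairwise_ge_of_mem_antitoneWords {n : ℕ} {w : List Bool} (hw : w ∈ antitoneWords n) :
    w.Pairwise (· ≥ ·) := by
  obtain ⟨j, -, rfl⟩ := Finset.mem_image.1 hw
  simp [List.pairwise_append, List.pairwise_replicate]

lemma not_pairwise_le_of_mem_antitoneWords {n : ℕ} {w : List Bool} (hw : w ∈ antitoneWords n) :
    ¬ w.Pairwise (· ≤ ·) := by
  obtain ⟨j, hj, rfl⟩ := Finset.mem_image.1 hw
  rw [Finset.mem_Icc] at hj
  simp [List.pairwise_append, List.pairwise_replicate]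
  omega

lemma disjoint_monotoneWords_antitoneWords (n : ℕ) :
    Disjoint (monotoneWords n) (antitoneWords n) :=
  Finset.disjoint_left.2 fun _ h₁ h₂ =>
    not_pairwise_le_of_mem_antitoneWords h₂ (pairwise_le_of_mem_monotoneWords h₁)

lemma disjoint_union_longFactors (n : ℕ) :
    Disjoint (monotoneWords n ∪ antitoneWords n) (longFactors n) := by
  refine Finset.disjoint_left.2 fun w hw hlong => ?_
  obtain ⟨hle, hge⟩ := not_pairwise_of_mem_longFactors hlong
  rcases Finset.mem_union.1 hw with h | h
  · exact hle (pairwise_le_of_mem_monotoneWords h)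
  · exact hge (pairwise_ge_of_mem_antitoneWords h)

lemma injOn_factorAt_pairStart (n : ℕ) :
    Set.InjOn (fun p : ℕ × ℕ => factorAt zeroOneBlocksWord (pairStart p.1 p.2) n)
      (pairs n) := by
  rintro ⟨a, b⟩ hab ⟨a', b'⟩ hab' h
  simp only [Finset.mem_coe, mem_pairs] at hab hab' h
  rcases le_or_gt a b with h₁ | h₁ <;> rcases le_or_gt a' b' with h₂ | h₂
  · rw [factorAt_pairStart_of_le h₁ hab, factorAt_pairStart_of_le h₂ hab'] at h
    obtain ⟨ha, hb, -⟩ := List.replicate_append_replicate_append_cons_inj Bool.false_ne_true h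
    simp_all
  · rw [factorAt_pairStart_of_le h₁ hab, factorAt_pairStart_of_lt h₂ hab'] at h
    simpa [List.replicate_succ] using congrArg List.head? h
  · rw [factorAt_pairStart_of_lt h₁ hab, factorAt_pairStart_of_le h₂ hab'] at h
    simpa [List.replicate_succ] using congrArg List.head? h
  · rw [factorAt_pairStart_of_lt h₁ hab, factorAt_pairStart_of_lt h₂ hab'] at h
    obtain ⟨hb, ha, -⟩ := List.replicate_append_replicate_append_cons_inj (by decide) h
    simp_all

lemma card_monotoneWords (n : ℕ) : (monotoneWords n).card = n + 1 := by
  rw [monotoneWords, Finset.card_image_of_injective _ fun i j h => by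
    simpa [List.count_replicate] using congrArg (List.count false) h, Finset.card_range]

lemma card_antitoneWords (n : ℕ) : (antitoneWords n).card = n - 1 := by
  rw [antitoneWords, Finset.card_image_of_injective _ fun i j h => by
    simpa [List.count_replicate] using congrArg (List.count true) h, Nat.card_Icc,
    Nat.add_sub_cancel]

lemma card_longFactors (n : ℕ) :
    (longFactors n).card = ∑ k ∈ Finset.range (n - 2), (k + 1) := by
  rw [longFactors, Finset.card_image_of_injOn (injOn_factorAt_pairStart n), card_pairs]

lemma card_factorSet (n : ℕ) : (factorSet n).card = n * (n + 1) / 2 + 1 := by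
  rw [factorSet, Finset.card_union_of_disjoint (disjoint_union_longFactors n),
    Finset.card_union_of_disjoint (disjoint_monotoneWords_antitoneWords n), card_monotoneWords,
    card_antitoneWords, card_longFactors]
  rcases n with _ | _ | n
  · rfl
  · rfl
  have gauss := Finset.sum_range_id_mul_two (n + 1)
  rw [Finset.sum_range_succ'] at gauss
  have hprod : (n + 1 + 1) * (n + 1 + 1 + 1) = (n + 1) * n + 4 * n + 6 := by ring
  rw [show n + 1 + 1 - 2 = n by omega]
  simp only [Nat.add_sub_cancel] at gauss
  omega

lemma exists_eq_factorAt_of_mem_factorSet {n : ℕ} {w : List Bool} (hw : w ∈ factorSet n) :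
    ∃ s, w = factorAt zeroOneBlocksWord s n := by
  have hn := blockStart_succ n
  have hn' := blockStart_succ (n + 1)
  rcases Finset.mem_union.1 hw with hw | hw
  rcases Finset.mem_union.1 hw with hw | hw
  · obtain ⟨i, hi, rfl⟩ := Finset.mem_image.1 hw
    rw [Finset.mem_range] at hi
    refine ⟨blockStart n + (n + 1 - i), ?_⟩
    rw [factorAt_eq_replicate_append_replicate (x := i), min_eq_left (by omega)]
    · exact fun k hk => apply_eq_false (m := n) (by omega) (by omega)
    · exact fun k hk hik => apply_eq_true (m := n) (by omega) (by omega)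
  · obtain ⟨j, hj, rfl⟩ := Finset.mem_image.1 hw
    rw [Finset.mem_Icc] at hj
    refine ⟨blockStart n + (n + 1) + (n + 1 - j), ?_⟩
    rw [factorAt_eq_replicate_append_replicate (x := j), min_eq_left (by omega)]
    · exact fun k hk => apply_eq_true (m := n) (by omega) (by omega)
    · exact fun k hk hjk => apply_eq_false (m := n + 1) (by omega) (by omega)
  · obtain ⟨p, -, rfl⟩ := Finset.mem_image.1 hw
    exact ⟨_, rfl⟩

lemma setOf_isFactor_eq_factorSet (n : ℕ) :
    {w | IsFactor zeroOneBlocksWord w ∧ w.length = n} = factorSet n := by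
  ext w
  constructor
  · rintro ⟨⟨s, hs⟩, rfl⟩
    have := factorAt_mem_factorSet s w.length
    rwa [← hs] at this
  · intro hw
    obtain ⟨s, rfl⟩ := exists_eq_factorAt_of_mem_factorSet hw
    exact ⟨⟨s, by rw [length_factorAt]⟩, length_factorAt _ _ _⟩

end ZeroOneBlocksWord

/-- The factor complexity of the word `0 1 00 11 000 111 ⋯` is `n(n+1)/2 + 1`. -/
theorem complexity_of_zeroOneBlocksWord :
    ∀ n : ℕ, {w | IsFactor zeroOneBlocksWord w ∧ w.length = n}.ncard = n * (n + 1) / 2 + 1 := by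
  intro n
  rw [ZeroOneBlocksWord.setOf_isFactor_eq_factorSet, Set.ncard_coe_finset,
    ZeroOneBlocksWord.card_factorSet]
end

section
/- Let (σ_n) be a sequence of non-erasing substitutions σ_n: A_{n+1}^* → A_n^* with all alphabets of cardinality at most D, which is everywhere growing (min_{a ∈ A_n} |σ_0σ_1⋯σ_{n-1}(a)| → ∞). Let X be the associated S-adic shift with complexity function p_X. Then the topological entropy h_X = lim (log p_X(N))/N satisfies h_X ≤ inf_{n≥0} (log |A_n|)/β_n^-, where β_n^- = min_{i∈A_n} |σ_0⋯σ_{n-1}(i)|. In particular h_X = 0. -/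
open Filter Topology

/-- The composition `σ_0 σ_1 ⋯ σ_{n-1} : A_n^* → A_0^*` of the first `n` substitutions of a
directive sequence over the alphabets `A_n = Fin (d n)`. -/
def compSubV (d : ℕ → ℕ) (σ : ∀ n, Fin (d (n + 1)) → List (Fin (d n))) :
    ∀ n, List (Fin (d n)) → List (Fin (d 0))
  | 0 => id
  | n + 1 => fun w => compSubV d σ n (w.flatMap (σ n))

/-- The language of the `S`-adic shift of a directive sequence: the intersection over `n` of
the factorial closures of `σ_0 ⋯ σ_{n-1}(A_n^*)`. -/
def sadicLanguage (d : ℕ → ℕ) (σ : ∀ n, Fin (d (n + 1)) → List (Fin (d n))) :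
    Set (List (Fin (d 0))) :=
  ⋂ n : ℕ, {v | ∃ w : List (Fin (d n)), v <:+: compSubV d σ n w}

/-- The complexity function of a language. -/
noncomputable def complexity {A : Type*} (L : Set (List A)) (n : ℕ) : ℕ :=
  {w | w ∈ L ∧ w.length = n}.ncard

/-!
Fix a level `n`, and let `β` and `C` be the minimal and maximal lengths of the words
`σ_0 ⋯ σ_{n-1}(i)`, `i ∈ A_n`. A word of length `N` of the language is a factor of the image of a
word over `A_n`, so it is the window of length `N`, starting at one of `C + 1` offsets, of the
image of a word of length `K ≈ (N + C) / β`. Hence `p_X(N) ≤ |A_n|^K (C + 1)`, so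
`log p_X(N) ≤ N log |A_n| / β + O_n(1)`. With `|A_n| ≤ D` and `β → ∞` this forces
`log p_X(N) / N → 0`; the infimum bound is then just the nonnegativity of its terms.
-/

namespace List

variable {A B : Type*} (f : A → List B) {β C : ℕ}

theorem mul_length_le_length_flatMap (hβ : ∀ a, β ≤ (f a).length) (l : List A) :
    β * l.length ≤ (l.flatMap f).length := by
  have := card_nsmul_le_sum (l.map fun a => (f a).length) β (by simpa using fun a _ => hβ a)
  rw [length_flatMap]
  simpa [mul_comm] using this

theorem exists_drop_flatMap_eq (hC : ∀ a, (f a).length ≤ C) (w : List A) (s : ℕ) :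
    ∃ (w' : List A) (r : ℕ), r ≤ C ∧ r ≤ (w'.flatMap f).length ∧
      (w.flatMap f).drop s = (w'.flatMap f).drop r := by
  induction w generalizing s with
  | nil => exact ⟨[], 0, C.zero_le, le_rfl, by simp⟩
  | cons a t ih =>
    rcases lt_or_ge s (f a).length with hs | hs
    · exact ⟨a :: t, s, hs.le.trans (hC a), by simp only [flatMap_cons, length_append]; omega, rfl⟩
    · obtain ⟨w', r, hr, hrw', heq⟩ := ih (s - (f a).length)
      refine ⟨w', r, hr, hrw', ?_⟩
      obtain ⟨s', rfl⟩ := Nat.exists_eq_add_of_le hs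
      rw [flatMap_cons, drop_length_add_append, ← heq, Nat.add_sub_cancel_left]

theorem exists_length_eq_take_drop_flatMap (hβ : ∀ a, β ≤ (f a).length) (a₀ : A)
    (l : List A) {r N K : ℕ} (hK : r + N ≤ β * K) (hN : r + N ≤ (l.flatMap f).length) :
    ∃ l' : List A, l'.length = K ∧
      ((l.flatMap f).drop r).take N = ((l'.flatMap f).drop r).take N := by
  rw [take_drop]
  rcases le_or_gt K l.length with hl | hl
  · refine ⟨l.take K, by simp [hl], ?_⟩
    have hlong : r + N ≤ ((l.take K).flatMap f).length := by
      have h := mul_length_le_length_flatMap f hβ (l.take K)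
      rw [length_take, min_eq_left hl] at h
      omega
    conv_lhs => rw [← take_append_drop K l, flatMap_append, take_append_of_le_length hlong]
    rw [take_drop]
  · refine ⟨l ++ replicate (K - l.length) a₀, by simp; omega, ?_⟩
    rw [flatMap_append, take_drop, take_append_of_le_length hN]

theorem exists_infix_flatMap_eq_take_drop (hβ : ∀ a, β ≤ (f a).length)
    (hC : ∀ a, (f a).length ≤ C) (a₀ : A) {v : List B} {w : List A} (hv : v <:+: w.flatMap f)
    {K : ℕ} (hK : C + v.length ≤ β * K) :
    ∃ (l : List A) (r : ℕ), l.length = K ∧ r ≤ C ∧ v = ((l.flatMap f).drop r).take v.length := by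
  obtain ⟨p, q, hpq⟩ := hv
  have hwindow : v = ((w.flatMap f).drop p.length).take v.length := by
    rw [← hpq, append_assoc, drop_left, take_left]
  obtain ⟨w', r, hr, hrw', heq⟩ := exists_drop_flatMap_eq f hC w p.length
  rw [heq] at hwindow
  have hN : r + v.length ≤ (w'.flatMap f).length := by
    have := congrArg length hwindow
    simp only [length_take, length_drop] at this
    omega
  obtain ⟨l, hl, hl'⟩ :=
    exists_length_eq_take_drop_flatMap f hβ a₀ w' (by omega : r + v.length ≤ β * K) hN
  exact ⟨l, r, hl, hr, hwindow.trans hl'⟩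

theorem ncard_infix_flatMap_le [Fintype A] [Nonempty A] (hβ : ∀ a, β ≤ (f a).length)
    (hC : ∀ a, (f a).length ≤ C) {N K : ℕ} (hK : C + N ≤ β * K) :
    {v : List B | (∃ w : List A, v <:+: w.flatMap f) ∧ v.length = N}.ncard
      ≤ Fintype.card A ^ K * (C + 1) := by
  let window : List.Vector A K × Fin (C + 1) → List B :=
    fun x => ((x.1.toList.flatMap f).drop x.2).take N
  have hsub : {v : List B | (∃ w : List A, v <:+: w.flatMap f) ∧ v.length = N}
      ⊆ Set.range window := by
    rintro v ⟨⟨w, hvw⟩, rfl⟩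
    obtain ⟨l, r, hl, hr, hveq⟩ :=
      exists_infix_flatMap_eq_take_drop f hβ hC (Classical.arbitrary A) hvw hK
    exact ⟨(⟨l, hl⟩, ⟨r, Nat.lt_succ_of_le hr⟩), hveq.symm⟩
  calc _ ≤ (Set.range window).ncard := Set.ncard_le_ncard hsub (Set.finite_range window)
    _ ≤ Nat.card (List.Vector A K × Fin (C + 1)) := by
        rw [← Set.image_univ, ← Set.ncard_univ]
        exact Set.ncard_image_le Set.finite_univ
    _ = Fintype.card A ^ K * (C + 1) := by simp [Nat.card_eq_fintype_card]

end List

theorem tendsto_div_natCast_zero_of_le_mul_add {x : ℕ → ℝ} (hx : ∀ N, 0 ≤ x N)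
    (h : ∀ ε > 0, ∃ B, ∀ N, x N ≤ ε * N + B) :
    Tendsto (fun N => x N / N) atTop (𝓝 0) := by
  refine tendsto_order.2 ⟨fun c hc => Eventually.of_forall fun N =>
    hc.trans_le (div_nonneg (hx N) N.cast_nonneg), fun ε hε => ?_⟩
  obtain ⟨B, hB⟩ := h (ε / 2) (half_pos hε)
  filter_upwards [(tendsto_const_div_atTop_nhds_zero_nat B).eventually (gt_mem_nhds (half_pos hε)),
    eventually_gt_atTop 0] with N hBN hN
  have hN' : (0 : ℝ) < N := Nat.cast_pos.2 hN
  calc x N / N ≤ (ε / 2 * N + B) / N := by gcongr; exact hB N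
    _ = ε / 2 + B / N := by field_simp
    _ < ε := by linarith

theorem Real.monotone_log_natCast : Monotone fun n : ℕ => Real.log n := by
  intro m n hmn
  rcases m.eq_zero_or_pos with rfl | hm
  · simpa using Real.log_natCast_nonneg n
  · exact Real.log_le_log (Nat.cast_pos.2 hm) (Nat.cast_le.2 hmn)

section Sadic

variable {d : ℕ → ℕ} {σ : ∀ n, Fin (d (n + 1)) → List (Fin (d n))}

theorem compSubV_eq_flatMap (n : ℕ) (w : List (Fin (d n))) :
    compSubV d σ n w = w.flatMap fun c => compSubV d σ n [c] := by
  induction n with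
  | zero => simp [compSubV]
  | succ n ih =>
    change compSubV d σ n (w.flatMap (σ n)) = w.flatMap fun c => compSubV d σ n ([c].flatMap (σ n))
    rw [ih, List.flatMap_assoc]
    congr 1
    funext c
    rw [List.flatMap_singleton, ← ih]

theorem complexity_sadicLanguage_le {n : ℕ} (hdn : 0 < d n) {β C N K : ℕ}
    (hβ : ∀ i, β ≤ (compSubV d σ n [i]).length) (hC : ∀ i, (compSubV d σ n [i]).length ≤ C)
    (hK : C + N ≤ β * K) :
    complexity (sadicLanguage d σ) N ≤ d n ^ K * (C + 1) := by
  have : Nonempty (Fin (d n)) := ⟨⟨0, hdn⟩⟩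
  have hsub : {v | v ∈ sadicLanguage d σ ∧ v.length = N} ⊆
      {v | (∃ w : List (Fin (d n)), v <:+: w.flatMap fun c => compSubV d σ n [c]) ∧
        v.length = N} := by
    rintro v ⟨hv, hlen⟩
    obtain ⟨w, hw⟩ := Set.mem_iInter.1 hv n
    exact ⟨⟨w, compSubV_eq_flatMap n w ▸ hw⟩, hlen⟩
  calc complexity (sadicLanguage d σ) N
      ≤ _ := Set.ncard_le_ncard hsub ((List.finite_length_eq _ N).subset fun _ hv => hv.2)
    _ ≤ _ := List.ncard_infix_flatMap_le _ hβ hC hK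
    _ = d n ^ K * (C + 1) := by rw [Fintype.card_fin]

theorem log_complexity_sadicLanguage_le {n : ℕ} (hdn : 0 < d n) {β : ℕ}
    (hβ : ∀ i, β ≤ (compSubV d σ n [i]).length) (hβ0 : 0 < β) :
    ∃ B : ℝ, ∀ N : ℕ,
      Real.log (complexity (sadicLanguage d σ) N) ≤ Real.log (d n) / β * N + B := by
  obtain ⟨C, hC⟩ := (Set.finite_range fun i : Fin (d n) => (compSubV d σ n [i]).length).bddAbove
  have hβR : (0 : ℝ) < β := Nat.cast_pos.2 hβ0
  refine ⟨(C + β) / β * Real.log (d n) + Real.log (C + 1), fun N => ?_⟩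
  set K := (C + N) / β + 1
  have hK : C + N ≤ β * K := (Nat.lt_mul_div_succ (C + N) hβ0).le
  have hKβ : (K : ℝ) ≤ (C + N + β) / β := by
    have h := Nat.div_mul_le_self (C + N) β
    have : K * β ≤ C + N + β := by simp only [K, Nat.add_mul, one_mul]; omega
    rw [le_div_iff₀ hβR]
    exact_mod_cast this
  have hcount : complexity (sadicLanguage d σ) N ≤ d n ^ K * (C + 1) :=
    complexity_sadicLanguage_le hdn hβ (fun i => hC ⟨i, rfl⟩) hK
  calc _ ≤ Real.log ((d n ^ K * (C + 1) : ℕ) : ℝ) := Real.monotone_log_natCast hcount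
    _ = K * Real.log (d n) + Real.log (C + 1) := by
        push_cast
        rw [Real.log_mul (by positivity) (by positivity), Real.log_pow]
    _ ≤ (C + N + β) / β * Real.log (d n) + Real.log (C + 1) := by gcongr
    _ = _ := by field_simp; ring

end Sadic

theorem sadic_entropy_bound_general (d : ℕ → ℕ) (hd : ∀ n, 0 < d n)
    (D : ℕ) (hD : ∀ n, d n ≤ D)
    (σ : ∀ n, Fin (d (n + 1)) → List (Fin (d n)))
    (hgrow : ∀ a : ∀ n, Fin (d n),
      Tendsto (fun n => (compSubV d σ n [a n]).length) atTop atTop) :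
    ∃ h : ℝ,
      Tendsto (fun N => Real.log (complexity (sadicLanguage d σ) N) / N) atTop (𝓝 h) ∧
      (∀ n : ℕ, h ≤ Real.log (d n) / (⨅ i : Fin (d n), ((compSubV d σ n [i]).length : ℝ))) ∧
      h = 0 := by
  have : ∀ n, Nonempty (Fin (d n)) := fun n => ⟨⟨0, hd n⟩⟩
  choose a ha using fun n => Finite.exists_min fun i : Fin (d n) => (compSubV d σ n [i]).length
  have hβ : Tendsto (fun n => ((compSubV d σ n [a n]).length : ℝ)) atTop atTop :=
    tendsto_natCast_atTop_atTop.comp (hgrow a)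
  refine ⟨0, ?_, fun n => div_nonneg (Real.log_natCast_nonneg _)
    (Real.iInf_nonneg fun _ => Nat.cast_nonneg _), rfl⟩
  refine tendsto_div_natCast_zero_of_le_mul_add (fun N => Real.log_natCast_nonneg _) fun ε hε => ?_
  have hlogβ : Tendsto (fun n => Real.log D / (compSubV d σ n [a n]).length) atTop (𝓝 0) :=
    tendsto_const_nhds.div_atTop hβ
  obtain ⟨n, hβn, hεn⟩ :=
    ((hβ.eventually_gt_atTop 0).and (hlogβ.eventually (gt_mem_nhds hε))).exists
  obtain ⟨B, hB⟩ := log_complexity_sadicLanguage_le (hd n) (ha n) (Nat.cast_pos.1 hβn)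
  have hlog : Real.log (d n) / (compSubV d σ n [a n]).length ≤ ε := by
    refine le_trans ?_ hεn.le
    gcongr
    exacts [Nat.cast_pos.2 (hd n), hD n]
  exact ⟨B, fun N => (hB N).trans (by gcongr)⟩

/-- For an everywhere growing directive sequence of non-erasing substitutions over alphabets
of bounded cardinality, the topological entropy `h = lim (log p N)/N` of the associated
`S`-adic shift satisfies `h ≤ inf_n log|A_n| / β_n^-` where `β_n^- = min_i |σ_0⋯σ_{n-1}(i)|`;
in particular `h = 0`. -/
theorem sadic_entropy_bound (d : ℕ → ℕ) (hd : ∀ n, 0 < d n)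
    (D : ℕ) (hD : ∀ n, d n ≤ D)
    (σ : ∀ n, Fin (d (n + 1)) → List (Fin (d n)))
    (hne : ∀ n b, σ n b ≠ [])
    (hgrow : ∀ a : ∀ n, Fin (d n),
      Tendsto (fun n => (compSubV d σ n [a n]).length) atTop atTop) :
    ∃ h : ℝ,
      Tendsto (fun N => Real.log (complexity (sadicLanguage d σ) N) / N) atTop (𝓝 h) ∧
      (∀ n : ℕ, h ≤ Real.log (d n) / (⨅ i : Fin (d n), ((compSubV d σ n [i]).length : ℝ))) ∧
      h = 0 :=
  sadic_entropy_bound_general d hd D hD σ hgrow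
end

section
/- Let u be an infinite word over a finite alphabet admitting an S-adic representation u = lim σ_0σ_1⋯σ_{n-1}(a_n) with a weakly primitive directive sequence (σ_n), i.e., for each n there exists r such that the substitution σ_n σ_{n+1} ⋯ σ_{n+r} maps every letter to a word containing every letter. Then u is uniformly recurrent: every factor of u occurs infinitely often with bounded gaps. -/
open Filter Topology

/-- The composition `σ_n σ_{n+1} ⋯ σ_{n+k-1} : A_{n+k}^* → A_n^*`. -/
def segComp (d : ℕ → ℕ) (σ : ∀ n, Fin (d (n + 1)) → List (Fin (d n))) (n : ℕ) :
    ∀ k, List (Fin (d (n + k))) → List (Fin (d n))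
  | 0 => id
  | k + 1 => fun w => segComp d σ n k (w.flatMap (σ (n + k)))

/-!
A factor `w` of `u` lies in some block `σ_0 ⋯ σ_{N-1}(a_N)`. By weak primitivity `a_N` occurs in
`σ_N ⋯ σ_{N+r}(j)` for every letter `j`, so `w` lies in every block `σ_0 ⋯ σ_{M-1}(j)` with
`M = N + r + 1`. Every long prefix of `u` is a concatenation of these blocks, whose lengths are at
most some `B`, so every window of length `2B` contains a whole block and hence `w`.
-/

namespace List

variable {α : Type*}

theorem infix_take_drop_flatten {w : List α} {B : ℕ} (hB : 0 < B) :
    ∀ {L : List (List α)}, (∀ b ∈ L, w <:+: b ∧ b.length ≤ B) →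
      ∀ {p : ℕ}, p + 2 * B ≤ L.flatten.length → w <:+: (L.flatten.drop p).take (2 * B)
  | [], _, p, hp => by rw [flatten_nil, length_nil] at hp; omega
  | [b], hL, p, hp => by
    have := (hL b mem_cons_self).2
    rw [flatten_cons, flatten_nil, append_nil] at hp
    omega
  | b :: b' :: L, hL, p, hp => by
    rcases le_or_gt b.length p with hpb | hpb
    · have hrest : (b :: b' :: L).flatten.drop p = (b' :: L).flatten.drop (p - b.length) := by
        rw [flatten_cons, drop_append, drop_eq_nil_of_le hpb, nil_append]
      rw [hrest]
      refine infix_take_drop_flatten hB (fun c hc => hL c (mem_cons_of_mem _ hc)) ?_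
      simp only [flatten_cons, length_append] at hp ⊢
      omega
    · -- the window starts inside `b`, so it covers the whole next block `b'`
      have hb := (hL b mem_cons_self).2
      obtain ⟨hwb', hb'⟩ := hL b' (by simp)
      have hprefix : b.drop p ++ b' <+: ((b :: b' :: L).flatten.drop p).take (2 * B) := by
        rw [prefix_take_iff, flatten_cons, flatten_cons, drop_append_of_le_length hpb.le,
          ← append_assoc]
        exact ⟨prefix_append _ _, by simp only [length_append, length_drop]; omega⟩
      exact hwb'.trans ((suffix_append _ _).isInfix.trans hprefix.isInfix)

end List

theorem factorAt_eq_take_drop {A : Type*} {u : ℕ → A} {v : List A} {m : ℕ}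
    (hv : v.take m = factorAt u 0 m) {k K : ℕ} (hkK : k + K ≤ m) :
    factorAt u k K = (v.drop k).take K := by
  have hvu : ∀ j < m, v[j]? = some (u j) := fun j hj => by
    rw [← List.getElem?_take_of_lt hj, hv]
    simp [factorAt, hj]
  ext i : 1
  by_cases hi : i < K
  · simp [factorAt, hi, hvu (k + i) (by omega)]
  · simp [factorAt, hi]

theorem factorAt_infix_of_take_eq {A : Type*} {u : ℕ → A} {v : List A} {m : ℕ}
    (hv : v.take m = factorAt u 0 m) {k K : ℕ} (hkK : k + K ≤ m) :
    factorAt u k K <:+: v := by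
  rw [factorAt_eq_take_drop hv hkK]
  exact (List.take_prefix _ _).isInfix.trans (List.drop_suffix _ _).isInfix

section SAdic

variable {d : ℕ → ℕ} {σ : ∀ n, Fin (d (n + 1)) → List (Fin (d n))}

theorem compSubV_nil (n : ℕ) : compSubV d σ n [] = [] := by
  induction n with
  | zero => rfl
  | succ n ih => exact ih

theorem compSubV_append (n : ℕ) (x y : List (Fin (d n))) :
    compSubV d σ n (x ++ y) = compSubV d σ n x ++ compSubV d σ n y := by
  induction n with
  | zero => rfl
  | succ n ih => exact (congrArg _ (List.flatMap_append ..)).trans (ih _ _)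

theorem compSubV_eq_flatten (n : ℕ) (v : List (Fin (d n))) :
    compSubV d σ n v = (v.map fun c => compSubV d σ n [c]).flatten := by
  induction v with
  | nil => exact compSubV_nil n
  | cons c v ih => rw [← List.singleton_append, compSubV_append, ih]; rfl

theorem compSubV_infix {n : ℕ} {x y : List (Fin (d n))} (h : x <:+: y) :
    compSubV d σ n x <:+: compSubV d σ n y := by
  obtain ⟨s, t, rfl⟩ := h
  exact ⟨compSubV d σ n s, compSubV d σ n t, by rw [compSubV_append, compSubV_append]⟩

theorem compSubV_add (n k : ℕ) (w : List (Fin (d (n + k)))) :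
    compSubV d σ (n + k) w = compSubV d σ n (segComp d σ n k w) := by
  induction k with
  | zero => rfl
  | succ k ih => exact ih _

theorem compSubV_singleton_infix_of_mem_segComp {n k : ℕ} {i : Fin (d n)}
    {j : Fin (d (n + k))} (h : i ∈ segComp d σ n k [j]) :
    compSubV d σ n [i] <:+: compSubV d σ (n + k) [j] := by
  rw [compSubV_add]
  exact compSubV_infix ((List.singleton_infix_iff _ _).mpr h)

end SAdic

/-- `u = lim σ_0 ⋯ σ_{n-1}(a_n)`. -/
def IsSAdicLimit (d : ℕ → ℕ) (σ : ∀ n, Fin (d (n + 1)) → List (Fin (d n))) (a : ∀ n, Fin (d n))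
    (u : ℕ → Fin (d 0)) : Prop :=
  ∀ m : ℕ, ∀ᶠ n in atTop,
    m ≤ (compSubV d σ n [a n]).length ∧ (compSubV d σ n [a n]).take m = factorAt u 0 m

namespace IsSAdicLimit

variable {d : ℕ → ℕ} {σ : ∀ n, Fin (d (n + 1)) → List (Fin (d n))} {a : ∀ n, Fin (d n)}
  {u : ℕ → Fin (d 0)}

theorem exists_infix_compSubV (hlim : IsSAdicLimit d σ a u) {w : List (Fin (d 0))}
    (hw : IsFactor u w) : ∃ N, w <:+: compSubV d σ N [a N] := by
  obtain ⟨k, hk⟩ := hw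
  obtain ⟨N, -, hN⟩ := (hlim (k + w.length)).exists
  exact ⟨N, hk ▸ factorAt_infix_of_take_eq hN le_rfl⟩

theorem exists_window_of_forall_infix (hlim : IsSAdicLimit d σ a u) {w : List (Fin (d 0))}
    (hw : w ≠ []) {M : ℕ} (hM : ∀ j, w <:+: compSubV d σ M [j]) :
    ∃ K, ∀ k, w <:+: factorAt u k K := by
  set B := Finset.univ.sup fun j : Fin (d M) => (compSubV d σ M [j]).length
  have hB : ∀ j, (compSubV d σ M [j]).length ≤ B := fun j =>
    Finset.le_sup (f := fun j : Fin (d M) => (compSubV d σ M [j]).length) (Finset.mem_univ j)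
  have hB0 : 0 < B := (List.length_pos_iff.mpr hw).trans_le ((hM (a M)).length_le.trans (hB _))
  refine ⟨2 * B, fun k => ?_⟩
  obtain ⟨n, ⟨hlen, hpre⟩, hMn⟩ := ((hlim (k + 2 * B)).and (eventually_ge_atTop M)).exists
  obtain ⟨s, rfl⟩ := Nat.exists_eq_add_of_le hMn
  have hblocks : compSubV d σ (M + s) [a (M + s)] =
      ((segComp d σ M s [a (M + s)]).map fun c => compSubV d σ M [c]).flatten := by
    rw [compSubV_add, compSubV_eq_flatten]
  rw [factorAt_eq_take_drop hpre le_rfl, hblocks]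
  refine List.infix_take_drop_flatten hB0 ?_ (hblocks ▸ hlen)
  simp only [List.mem_map]
  rintro _ ⟨c, -, rfl⟩
  exact ⟨hM c, hB c⟩

end IsSAdicLimit

theorem weakly_primitive_implies_uniformly_recurrent_general
    (d : ℕ → ℕ) (σ : ∀ n, Fin (d (n + 1)) → List (Fin (d n)))
    (a : ∀ n, Fin (d n)) (u : ℕ → Fin (d 0))
    (hlim : ∀ m : ℕ, ∀ᶠ n in atTop,
      m ≤ (compSubV d σ n [a n]).length ∧
      (compSubV d σ n [a n]).take m = factorAt u 0 m)
    (hprim : ∀ n : ℕ, ∃ r : ℕ, ∀ (i : Fin (d n)) (j : Fin (d (n + (r + 1)))),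
      i ∈ segComp d σ n (r + 1) [j]) :
    ∀ w : List (Fin (d 0)), IsFactor u w → ∃ K : ℕ, ∀ k : ℕ, w <:+: factorAt u k K := by
  intro w hw
  rcases eq_or_ne w [] with rfl | hw0
  · exact ⟨0, fun _ => List.nil_infix⟩
  obtain ⟨N, hN⟩ := IsSAdicLimit.exists_infix_compSubV hlim hw
  obtain ⟨r, hr⟩ := hprim N
  exact IsSAdicLimit.exists_window_of_forall_infix hlim hw0 fun j =>
    hN.trans (compSubV_singleton_infix_of_mem_segComp (hr (a N) j))

/-- If the infinite word `u` admits an `S`-adic representation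
`u = lim σ_0 ⋯ σ_{n-1}(a_n)` with a weakly primitive directive sequence (for each `n` some
composition `σ_n ⋯ σ_{n+r}` is positive), then `u` is uniformly recurrent: every factor
occurs in every window of some fixed length `K`. -/
theorem weakly_primitive_implies_uniformly_recurrent
    (d : ℕ → ℕ) (σ : ∀ n, Fin (d (n + 1)) → List (Fin (d n)))
    (hne : ∀ n b, σ n b ≠ [])
    (a : ∀ n, Fin (d n)) (u : ℕ → Fin (d 0))
    (hlim : ∀ m : ℕ, ∀ᶠ n in atTop,
      m ≤ (compSubV d σ n [a n]).length ∧
      (compSubV d σ n [a n]).take m = factorAt u 0 m)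
    (hprim : ∀ n : ℕ, ∃ r : ℕ, ∀ (i : Fin (d n)) (j : Fin (d (n + (r + 1)))),
      i ∈ segComp d σ n (r + 1) [j]) :
    ∀ w : List (Fin (d 0)), IsFactor u w → ∃ K : ℕ, ∀ k : ℕ, w <:+: factorAt u k K :=
  weakly_primitive_implies_uniformly_recurrent_general d σ a u hlim hprim
end

section
/- Let (M_n) be a sequence of non-negative integer d×d matrices and suppose there exist a matrix B with all entries positive and indices j_1 < k_1 ≤ j_2 < k_2 ≤ ⋯ such that B = M_{j_1}⋯M_{k_1−1} = M_{j_2}⋯M_{k_2−1} = ⋯. Then the nested intersection ∩_{n∈ℕ} M_0 M_1 ⋯ M_{n−1} ℝ_+^d is a single half-line ℝ_+ f for some vector f with all entries positive. -/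
/-!
Let `κ` bound the cross ratios `B i l * B i' l' / (B i' l * B i l')` of the positive block and
`θ = 1 - κ⁻¹`. If `c ≥ 1` bounds the cross ratios `u i * v i' / (u i' * v i)` of two
non-negative vectors, then `c` bounds those of their images under a non-negative matrix, and
`1 + θ (c - 1)` those of their images under `B` (Birkhoff's contraction, obtained by pairing the
terms `(l, l')` and `(l', l)` of the expanded products). The cone `M_0 ⋯ M_{k_m - 1} ℝ_+^d`
passes through `m + 1` copies of `B`, so any two of its vectors have cross ratios at most
`1 + θ ^ m (κ - 1)`. The cones are closed and nested, so their traces on the standard simplex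
share a point `f`; every other common vector has cross ratio `1` with `f`, i.e. is a multiple
of `f`, and the cross-ratio bound against a positive vector of the cone makes `f` positive.
-/

open Filter Topology Matrix

section CrossRatio

variable {m n : Type*} [Fintype n]

/-- For positive vectors, `CrossRatioLE c u v` says that Hilbert's projective distance between
`u` and `v` is at most `log c`. -/
def CrossRatioLE (c : ℝ) (u v : m → ℝ) : Prop :=
  ∀ i i', u i * v i' ≤ c * (u i' * v i)

lemma mulVec_apply_mul_mulVec_apply (A : Matrix m n ℝ) (u v : n → ℝ) (i i' : m) :
    (A *ᵥ u) i * (A *ᵥ v) i' = ∑ l, ∑ l', A i l * A i' l' * (u l * v l') := by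
  simp only [mulVec, dotProduct, Finset.sum_mul_sum]
  exact Finset.sum_congr rfl fun l _ => Finset.sum_congr rfl fun l' _ => by ring

lemma mulVec_apply_mul_mulVec_apply_swap (A : Matrix m n ℝ) (u v : n → ℝ) (i i' : m) :
    (A *ᵥ u) i' * (A *ᵥ v) i = ∑ l, ∑ l', A i l * A i' l' * (u l' * v l) := by
  rw [mulVec_apply_mul_mulVec_apply, Finset.sum_comm]
  exact Finset.sum_congr rfl fun l _ => Finset.sum_congr rfl fun l' _ => by ring

lemma CrossRatioLE.mulVec {A : Matrix m n ℝ} (hA : ∀ i l, 0 ≤ A i l) {c : ℝ} {u v : n → ℝ}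
    (h : CrossRatioLE c u v) : CrossRatioLE c (A *ᵥ u) (A *ᵥ v) := by
  intro i i'
  rw [mulVec_apply_mul_mulVec_apply, mulVec_apply_mul_mulVec_apply_swap]
  simp only [Finset.mul_sum]
  refine Finset.sum_le_sum fun l _ => Finset.sum_le_sum fun l' _ => ?_
  linear_combination mul_le_mul_of_nonneg_left (h l l') (mul_nonneg (hA i l) (hA i' l'))

lemma crossRatioLE_mulVec_of_cols {A : Matrix m n ℝ} {κ : ℝ}
    (hA : ∀ l l', CrossRatioLE κ (Aᵀ l) (Aᵀ l')) {x y : n → ℝ} (hx : 0 ≤ x) (hy : 0 ≤ y) :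
    CrossRatioLE κ (A *ᵥ x) (A *ᵥ y) := by
  intro i i'
  rw [mulVec_apply_mul_mulVec_apply, mulVec_apply_mul_mulVec_apply]
  simp only [Finset.mul_sum]
  refine Finset.sum_le_sum fun l _ => Finset.sum_le_sum fun l' _ => ?_
  have hcol : A i l * A i' l' ≤ κ * (A i' l * A i l') := hA l l' i i'
  linear_combination mul_le_mul_of_nonneg_right hcol (mul_nonneg (hx l) (hy l'))

lemma CrossRatioLE.mono {c c' : ℝ} {u v : m → ℝ} (h : CrossRatioLE c u v) (hcc' : c ≤ c')
    (hu : 0 ≤ u) (hv : 0 ≤ v) : CrossRatioLE c' u v := fun i i' =>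
  (h i i').trans (mul_le_mul_of_nonneg_right hcc' (mul_nonneg (hu i') (hv i)))

lemma crossRatioLE_one_of_forall {u v : m → ℝ} (h : ∀ c > 1, CrossRatioLE c u v) :
    CrossRatioLE 1 u v := by
  intro i i'
  have hlim : Tendsto (fun c : ℝ => c * (u i' * v i)) (𝓝[>] 1) (𝓝 (1 * (u i' * v i))) :=
    ((continuous_mul_const _).tendsto 1).mono_left nhdsWithin_le_nhds
  exact ge_of_tendsto hlim (eventually_nhdsWithin_of_forall fun c hc => h c hc i i')

lemma CrossRatioLE.pos {c : ℝ} {u v : m → ℝ} (h : CrossRatioLE c u v) (hu : 0 ≤ u) (hu0 : u ≠ 0)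
    (hv : ∀ i, 0 < v i) (i : m) : 0 < u i := by
  refine (hu i).lt_of_ne' fun hui => hu0 (funext fun i' => ?_)
  have hui : u i = 0 := hui
  have := h i' i
  rw [hui, zero_mul, mul_zero] at this
  exact le_antisymm (nonpos_of_mul_nonpos_left this (hv i)) (hu i')

lemma CrossRatioLE.eq_sum_smul [Fintype m] {u v : m → ℝ} (h : CrossRatioLE 1 u v)
    (hu : ∑ i, u i = 1) : v = (∑ i, v i) • u := by
  funext i
  have hsymm : ∀ i', u i' * v i = u i * v i' := fun i' =>
    le_antisymm (by simpa using h i' i) (by simpa using h i i')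
  calc v i = ∑ i', u i' * v i := by rw [← Finset.sum_mul, hu, one_mul]
    _ = ∑ i', u i * v i' := Finset.sum_congr rfl fun i' _ => hsymm i'
    _ = ((∑ i', v i') • u) i := by rw [← Finset.mul_sum, Pi.smul_apply, smul_eq_mul, mul_comm]

lemma sub_mul_sub_le_of_ratio_le {κ c a a' w w' : ℝ} (hκ : 1 ≤ κ) (hc : 1 ≤ c) (ha : 0 ≤ a)
    (ha' : 0 ≤ a') (hw : 0 ≤ w) (hw' : 0 ≤ w') (haa' : a ≤ κ * a') (ha'a : a' ≤ κ * a)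
    (hww' : w ≤ c * w') (hw'w : w' ≤ c * w) :
    (a - a') * (w - w') ≤ (1 - κ⁻¹) * (c - 1) * (a' * w + a * w') := by
  wlog hle : w' ≤ w generalizing a a' w w'
  · linarith [this ha' ha hw' hw ha'a haa' hw'w hww' (le_of_not_ge hle)]
  have hθ : 0 ≤ 1 - κ⁻¹ := sub_nonneg.2 (inv_le_one_of_one_le₀ hκ)
  have hκa : κ⁻¹ * a ≤ a' := by
    rw [inv_mul_le_iff₀ (by linarith)]; exact haa'
  calc (a - a') * (w - w') ≤ (1 - κ⁻¹) * a * (w - w') := by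
        apply mul_le_mul_of_nonneg_right _ (sub_nonneg.2 hle); linarith
    _ ≤ (1 - κ⁻¹) * a * ((c - 1) * w') := by
        apply mul_le_mul_of_nonneg_left _ (mul_nonneg hθ ha); linarith
    _ ≤ (1 - κ⁻¹) * (c - 1) * (a' * w + a * w') := by
        nlinarith [mul_nonneg (mul_nonneg hθ (sub_nonneg.2 hc)) (mul_nonneg ha' hw)]

lemma CrossRatioLE.mulVec_contract {A : Matrix m n ℝ} (hA : ∀ i l, 0 ≤ A i l) {κ : ℝ}
    (hκ : 1 ≤ κ) (hcols : ∀ l l', CrossRatioLE κ (Aᵀ l) (Aᵀ l')) {c : ℝ} (hc : 1 ≤ c)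
    {u v : n → ℝ} (hu : 0 ≤ u) (hv : 0 ≤ v) (h : CrossRatioLE c u v) :
    CrossRatioLE (1 + (1 - κ⁻¹) * (c - 1)) (A *ᵥ u) (A *ᵥ v) := by
  intro i i'
  have key : ∀ l l', (A i l * A i' l' - A i' l * A i l') * (u l * v l' - u l' * v l) ≤
      (1 - κ⁻¹) * (c - 1) * (A i' l * A i l' * (u l * v l') + A i l * A i' l' * (u l' * v l)) :=
    fun l l' => sub_mul_sub_le_of_ratio_le hκ hc (mul_nonneg (hA i l) (hA i' l'))
      (mul_nonneg (hA i' l) (hA i l')) (mul_nonneg (hu l) (hv l')) (mul_nonneg (hu l') (hv l))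
      (hcols l l' i i') (hcols l l' i' i) (h l l') (h l' l)
  -- summed over all `(l, l')`, the left-hand sides add up to twice the difference of the products
  have hsum := Finset.sum_le_sum fun l (_ : l ∈ Finset.univ) =>
    Finset.sum_le_sum fun l' (_ : l' ∈ Finset.univ) => key l l'
  simp only [mul_sub, sub_mul, mul_add, Finset.sum_sub_distrib, Finset.sum_add_distrib,
    ← Finset.mul_sum] at hsum
  rw [← mulVec_apply_mul_mulVec_apply, ← mulVec_apply_mul_mulVec_apply,
    ← mulVec_apply_mul_mulVec_apply_swap, ← mulVec_apply_mul_mulVec_apply_swap] at hsum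
  linarith

end CrossRatio

lemma exists_crossRatioLE_cols {m n : Type*} [Finite m] [Finite n] {B : Matrix m n ℝ}
    (hB : ∀ i l, 0 < B i l) : ∃ κ, 1 ≤ κ ∧ ∀ l l', CrossRatioLE κ (Bᵀ l) (Bᵀ l') := by
  obtain ⟨K, hK⟩ := Finite.exists_le fun p : m × m × n × n =>
    B p.1 p.2.2.1 * B p.2.1 p.2.2.2 / (B p.2.1 p.2.2.1 * B p.1 p.2.2.2)
  refine ⟨max K 1, le_max_right K 1, fun l l' i i' => ?_⟩
  show B i l * B i' l' ≤ max K 1 * (B i' l * B i l')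
  rw [← div_le_iff₀ (mul_pos (hB i' l) (hB i l'))]
  exact (hK (i, i', l, l')).trans (le_max_left K 1)

section OrthantImage

variable {m n : Type*} [Fintype n]

def orthantImage (A : Matrix m n ℝ) : Set (m → ℝ) := (fun x => A *ᵥ x) '' {x | 0 ≤ x}

lemma sum_mulVec_eq_sum_colSum_mul [Fintype m] (A : Matrix m n ℝ) (x : n → ℝ) :
    ∑ i, (A *ᵥ x) i = ∑ l, (∑ i, A i l) * x l := by
  simp only [mulVec, dotProduct, Finset.sum_mul]
  exact Finset.sum_comm

/-- Zeroing the coordinates of `x` at the zero columns of `A` bounds `x` by `A *ᵥ x`. -/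
lemma exists_nonneg_mulVec_eq_and_le [Fintype m] (A : Matrix m n ℝ) (hA : ∀ i l, 0 ≤ A i l)
    {x : n → ℝ} (hx : 0 ≤ x) : ∃ x' : n → ℝ, 0 ≤ x' ∧ A *ᵥ x' = A *ᵥ x ∧
      ∀ l, x' l ≤ (∑ i, A i l)⁻¹ * ∑ i, (A *ᵥ x) i := by
  have hcol : ∀ l, 0 ≤ ∑ i, A i l := fun l => Finset.sum_nonneg fun i _ => hA i l
  refine ⟨fun l => (∑ i, A i l)⁻¹ * ((∑ i, A i l) * x l), fun l => ?_, ?_, fun l => ?_⟩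
  · exact mul_nonneg (inv_nonneg.2 (hcol l)) (mul_nonneg (hcol l) (hx l))
  · ext i
    refine Finset.sum_congr rfl fun l _ => ?_
    dsimp only
    rcases eq_or_ne (∑ i, A i l) 0 with h0 | h0
    · rw [(Finset.sum_eq_zero_iff_of_nonneg fun i _ => hA i l).1 h0 i (Finset.mem_univ i),
        zero_mul, zero_mul]
    · rw [inv_mul_cancel_left₀ h0]
  · refine mul_le_mul_of_nonneg_left ?_ (inv_nonneg.2 (hcol l))
    rw [sum_mulVec_eq_sum_colSum_mul]
    exact Finset.single_le_sum (fun l _ => mul_nonneg (hcol l) (hx l)) (Finset.mem_univ l)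

lemma isClosed_orthantImage [Fintype m] (A : Matrix m n ℝ) (hA : ∀ i l, 0 ≤ A i l) :
    IsClosed (orthantImage A) := by
  refine isClosed_of_closure_subset fun f hf => ?_
  obtain ⟨y, hyA, hyf⟩ := mem_closure_iff_seq_limit.1 hf
  choose x hx hxy using hyA
  dsimp only at hxy
  choose x' hx' hx'x hx'le using fun k => exists_nonneg_mulVec_eq_and_le A hA (hx k)
  obtain ⟨S, hS⟩ := (((continuous_finsetSum _ fun i _ => continuous_apply i).tendsto f).comp
    hyf).bddAbove_range
  have hbox : ∀ k, x' k ∈ Set.Icc 0 fun l => (∑ i, A i l)⁻¹ * S := fun k =>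
    ⟨hx' k, fun l => (hx'le k l).trans (mul_le_mul_of_nonneg_left
      (by rw [hxy]; exact hS ⟨k, rfl⟩) (inv_nonneg.2 (Finset.sum_nonneg fun i _ => hA i l)))⟩
  obtain ⟨w, hw, φ, hφ, hlim⟩ := isCompact_Icc.tendsto_subseq hbox
  refine ⟨w, hw.1, tendsto_nhds_unique
    (((continuous_const.matrix_mulVec continuous_id).tendsto w).comp hlim) ?_⟩
  simpa [Function.comp_def, hx'x, hxy] using hyf.comp hφ.tendsto_atTop

lemma mulVec_nonneg {A : Matrix m n ℝ} (hA : ∀ i l, 0 ≤ A i l) {x : n → ℝ} (hx : 0 ≤ x) :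
    0 ≤ A *ᵥ x :=
  fun i => Finset.sum_nonneg fun l _ => mul_nonneg (hA i l) (hx l)

lemma mulVec_pos_of_exists_pos {A : Matrix m n ℝ} (hA : ∀ i l, 0 ≤ A i l)
    (hrow : ∀ i, ∃ l, 0 < A i l) {x : n → ℝ} (hx : ∀ l, 0 < x l) (i : m) : 0 < (A *ᵥ x) i := by
  obtain ⟨l, hl⟩ := hrow i
  exact Finset.sum_pos' (fun l _ => mul_nonneg (hA i l) (hx l).le)
    ⟨l, Finset.mem_univ l, mul_pos hl (hx l)⟩

lemma smul_mem_orthantImage {A : Matrix m n ℝ} {t : ℝ} (ht : 0 ≤ t) {y : m → ℝ}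
    (hy : y ∈ orthantImage A) : t • y ∈ orthantImage A := by
  obtain ⟨x, hx, rfl⟩ := hy
  exact ⟨t • x, smul_nonneg ht (show 0 ≤ x from hx), mulVec_smul A t x⟩

lemma nonneg_of_mem_orthantImage {A : Matrix m n ℝ} (hA : ∀ i l, 0 ≤ A i l) {y : m → ℝ}
    (hy : y ∈ orthantImage A) : 0 ≤ y := by
  obtain ⟨x, hx, rfl⟩ := hy
  exact mulVec_nonneg hA hx

lemma orthantImage_mul_subset {o : Type*} [Fintype o] (A : Matrix m n ℝ) {Q : Matrix n o ℝ}
    (hQ : ∀ i l, 0 ≤ Q i l) : orthantImage (A * Q) ⊆ orthantImage A := by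
  rintro _ ⟨x, hx, rfl⟩
  exact ⟨Q *ᵥ x, nonneg_of_mem_orthantImage hQ ⟨x, hx, rfl⟩, mulVec_mulVec x A Q⟩

end OrthantImage

section ConeContraction

variable {ι : Type*} [Fintype ι]

theorem exists_iInter_eq_ray [Nonempty ι] {C : ℕ → Set (ι → ℝ)} (hanti : Antitone C)
    (hclosed : ∀ n, IsClosed (C n)) (hsmul : ∀ n, ∀ t : ℝ, 0 ≤ t → ∀ x ∈ C n, t • x ∈ C n)
    (hnonneg : ∀ n, ∀ x ∈ C n, 0 ≤ x) (hpos : ∀ n, ∃ x ∈ C n, ∀ i, 0 < x i)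
    (hdiam : ∀ c > 1, ∃ n, ∀ u ∈ C n, ∀ v ∈ C n, CrossRatioLE c u v) :
    ∃ f : ι → ℝ, (∀ i, 0 < f i) ∧ ⋂ n, C n = {x | ∃ t : ℝ, 0 ≤ t ∧ x = t • f} := by
  obtain ⟨f, hf⟩ : (⋂ n, C n ∩ stdSimplex ℝ ι).Nonempty := by
    refine IsCompact.nonempty_iInter_of_sequence_nonempty_isCompact_isClosed _
      (fun n => Set.inter_subset_inter_left _ (hanti n.le_succ)) (fun n => ?_)
      ((isCompact_stdSimplex ℝ ι).inter_left (hclosed 0))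
      (fun n => (hclosed n).inter (isClosed_stdSimplex ℝ ι))
    obtain ⟨x, hx, hxpos⟩ := hpos n
    have hsum : 0 < ∑ i, x i := Finset.sum_pos (fun i _ => hxpos i) Finset.univ_nonempty
    refine ⟨(∑ i, x i)⁻¹ • x, hsmul n _ (inv_nonneg.2 hsum.le) x hx,
      fun i => mul_nonneg (inv_nonneg.2 hsum.le) (hxpos i).le, ?_⟩
    simp only [Pi.smul_apply, smul_eq_mul, ← Finset.mul_sum, inv_mul_cancel₀ hsum.ne']
  simp only [Set.mem_iInter, Set.mem_inter_iff] at hf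
  have hfC n := (hf n).1
  have hfΔ := (hf 0).2
  have hf0 : f ≠ 0 := fun h => by simpa [h] using hfΔ.2
  have hfpos : ∀ i, 0 < f i := by
    obtain ⟨n, hn⟩ := hdiam 2 one_lt_two
    obtain ⟨x, hx, hxpos⟩ := hpos n
    exact (hn f (hfC n) x hx).pos (hnonneg n f (hfC n)) hf0 hxpos
  refine ⟨f, hfpos, Set.Subset.antisymm (fun g hg => ?_) ?_⟩
  · rw [Set.mem_iInter] at hg
    have hfg : CrossRatioLE 1 f g := crossRatioLE_one_of_forall fun c hc => by
      obtain ⟨n, hn⟩ := hdiam c hc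
      exact hn f (hfC n) g (hg n)
    exact ⟨∑ i, g i, Finset.sum_nonneg fun i _ => hnonneg 0 g (hg 0) i, hfg.eq_sum_smul hfΔ.2⟩
  · rintro _ ⟨t, ht, rfl⟩
    exact Set.mem_iInter.2 fun n => hsmul n t ht f (hfC n)

end ConeContraction

section SegProd

variable {ι : Type*} [Fintype ι] [DecidableEq ι]

lemma list_prod_nonneg {L : List (Matrix ι ι ℝ)} (hL : ∀ A ∈ L, ∀ i l, 0 ≤ A i l) (i l : ι) :
    0 ≤ L.prod i l := by
  induction L generalizing i l with
  | nil => by_cases h : i = l <;> simp [h]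
  | cons A L ih =>
    rw [List.prod_cons, Matrix.mul_apply]
    exact Finset.sum_nonneg fun p _ => mul_nonneg (hL A (by simp) i p)
      (ih (fun A' hA' => hL A' (by simp [hA'])) p l)

lemma list_prod_mulVec_pos {L : List (Matrix ι ι ℝ)}
    (hL : ∀ A ∈ L, ∀ x : ι → ℝ, (∀ i, 0 < x i) → ∀ i, 0 < (A *ᵥ x) i) {x : ι → ℝ}
    (hx : ∀ i, 0 < x i) : ∀ i, 0 < (L.prod *ᵥ x) i := by
  induction L with
  | nil => simpa using hx
  | cons A L ih =>
    rw [List.prod_cons, ← mulVec_mulVec]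
    exact hL A (by simp) _ (ih fun A' hA' => hL A' (by simp [hA']))

/-- `segProd A a b = A a * A (a + 1) * ⋯ * A (b - 1)`. -/
def segProd {R : Type*} [Semiring R] (A : ℕ → Matrix ι ι R) (a b : ℕ) : Matrix ι ι R :=
  ((List.range' a (b - a)).map A).prod

lemma segProd_mul_segProd {R : Type*} [Semiring R] (A : ℕ → Matrix ι ι R) {a b c : ℕ}
    (hab : a ≤ b) (hbc : b ≤ c) : segProd A a b * segProd A b c = segProd A a c := by
  obtain ⟨p, rfl⟩ := Nat.exists_eq_add_of_le hab
  obtain ⟨q, rfl⟩ := Nat.exists_eq_add_of_le hbc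
  simp only [segProd, Nat.add_sub_cancel_left, ← List.prod_append, ← List.map_append,
    List.range'_append_1]
  rw [add_assoc, Nat.add_sub_cancel_left]

variable {A : ℕ → Matrix ι ι ℝ}

lemma segProd_nonneg (hA : ∀ n i l, 0 ≤ A n i l) (a b : ℕ) (i l : ι) : 0 ≤ segProd A a b i l :=
  list_prod_nonneg (List.forall_mem_map.2 fun n _ => hA n) i l

lemma segProd_mulVec_pos (hA : ∀ n i l, 0 ≤ A n i l) (hrow : ∀ n i, ∃ l, 0 < A n i l)
    (a b : ℕ) {x : ι → ℝ} (hx : ∀ i, 0 < x i) : ∀ i, 0 < (segProd A a b *ᵥ x) i :=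
  list_prod_mulVec_pos
    (List.forall_mem_map.2 fun n _ _ => mulVec_pos_of_exists_pos (hA n) (hrow n)) hx

end SegProd

section Furstenberg

variable {ι : Type*} [Fintype ι] [DecidableEq ι] {A : ℕ → Matrix ι ι ℝ} {B : Matrix ι ι ℝ}
  {κ : ℝ} {j k : ℕ → ℕ}

lemma strictMono_of_interlacing (hjk : ∀ m, j m < k m) (hkj : ∀ m, k m ≤ j (m + 1)) :
    StrictMono k :=
  strictMono_nat_of_lt_succ fun n => (hkj n).trans_lt (hjk (n + 1))

/-- The first occurrence of `B` in `A (j a) ⋯ A (k (a + m) - 1)` yields the bound `κ`, and each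
of the `m` later ones contracts `c - 1` by the factor `1 - κ⁻¹`. -/
lemma crossRatioLE_segProd_mulVec (hA : ∀ n i l, 0 ≤ A n i l) (hκ : 1 ≤ κ)
    (hB : ∀ l l', CrossRatioLE κ (Bᵀ l) (Bᵀ l')) (hjk : ∀ m, j m < k m)
    (hkj : ∀ m, k m ≤ j (m + 1)) (hprod : ∀ m, segProd A (j m) (k m) = B) (m a : ℕ)
    {x y : ι → ℝ} (hx : 0 ≤ x) (hy : 0 ≤ y) :
    CrossRatioLE (1 + (1 - κ⁻¹) ^ m * (κ - 1))
      (segProd A (j a) (k (a + m)) *ᵥ x) (segProd A (j a) (k (a + m)) *ᵥ y) := by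
  induction m generalizing a with
  | zero =>
    rw [add_zero, hprod, pow_zero, one_mul, add_sub_cancel]
    exact crossRatioLE_mulVec_of_cols hB hx hy
  | succ m ih =>
    have hk := (strictMono_of_interlacing hjk hkj).monotone
    have hsplit : segProd A (j a) (k (a + (m + 1))) =
        B * (segProd A (k a) (j (a + 1)) * segProd A (j (a + 1)) (k (a + 1 + m))) := by
      rw [← hprod a, segProd_mul_segProd A (hkj a) ((hjk (a + 1)).le.trans (hk (by omega))),
        segProd_mul_segProd A (hjk a).le ((hkj a).trans ((hjk (a + 1)).le.trans (hk (by omega)))),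
        add_right_comm, add_assoc]
    have hθ : 0 ≤ 1 - κ⁻¹ := sub_nonneg.2 (inv_le_one_of_one_le₀ hκ)
    have hQ := segProd_nonneg hA (k a) (j (a + 1))
    have hR := segProd_nonneg hA (j (a + 1)) (k (a + 1 + m))
    have hcontract := ((ih (a + 1)).mulVec hQ).mulVec_contract (hprod 0 ▸ segProd_nonneg hA _ _)
      hκ hB (le_add_of_nonneg_right (mul_nonneg (pow_nonneg hθ m) (sub_nonneg.2 hκ)))
      (mulVec_nonneg hQ (mulVec_nonneg hR hx)) (mulVec_nonneg hQ (mulVec_nonneg hR hy))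
    rw [hsplit, ← mulVec_mulVec, ← mulVec_mulVec, ← mulVec_mulVec, ← mulVec_mulVec]
    convert hcontract using 1
    ring

lemma crossRatioLE_of_mem_orthantImage_segProd (hA : ∀ n i l, 0 ≤ A n i l) (hκ : 1 ≤ κ)
    (hB : ∀ l l', CrossRatioLE κ (Bᵀ l) (Bᵀ l')) (hjk : ∀ m, j m < k m)
    (hkj : ∀ m, k m ≤ j (m + 1)) (hprod : ∀ m, segProd A (j m) (k m) = B) (m : ℕ)
    {u v : ι → ℝ} (hu : u ∈ orthantImage (segProd A 0 (k m)))
    (hv : v ∈ orthantImage (segProd A 0 (k m))) :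
    CrossRatioLE (1 + (1 - κ⁻¹) ^ m * (κ - 1)) u v := by
  obtain ⟨x, hx, rfl⟩ := hu
  obtain ⟨y, hy, rfl⟩ := hv
  have hjkm : j 0 ≤ k m :=
    (hjk 0).le.trans ((strictMono_of_interlacing hjk hkj).monotone m.zero_le)
  simp only [← segProd_mul_segProd A (Nat.zero_le (j 0)) hjkm, ← mulVec_mulVec]
  have := crossRatioLE_segProd_mulVec hA hκ hB hjk hkj hprod m 0 hx hy
  rw [zero_add] at this
  exact this.mulVec (segProd_nonneg hA 0 (j 0))

theorem exists_iInter_orthantImage_segProd_eq_ray [Nonempty ι] (hA : ∀ n i l, 0 ≤ A n i l)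
    (hrow : ∀ n i, ∃ l, 0 < A n i l) (hκ : 1 ≤ κ) (hB : ∀ l l', CrossRatioLE κ (Bᵀ l) (Bᵀ l'))
    (hjk : ∀ m, j m < k m) (hkj : ∀ m, k m ≤ j (m + 1))
    (hprod : ∀ m, segProd A (j m) (k m) = B) :
    ∃ f : ι → ℝ, (∀ i, 0 < f i) ∧
      ⋂ n, orthantImage (segProd A 0 n) = {x | ∃ t : ℝ, 0 ≤ t ∧ x = t • f} := by
  have hθ : Tendsto (fun m => 1 + (1 - κ⁻¹) ^ m * (κ - 1)) atTop (𝓝 1) := by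
    have hlt : 1 - κ⁻¹ < 1 := sub_lt_self 1 (inv_pos.2 (zero_lt_one.trans_le hκ))
    simpa using ((tendsto_pow_atTop_nhds_zero_of_lt_one
      (sub_nonneg.2 (inv_le_one_of_one_le₀ hκ)) hlt).mul_const (κ - 1)).const_add 1
  refine exists_iInter_eq_ray (antitone_nat_of_succ_le fun n => ?_)
    (fun n => isClosed_orthantImage _ (segProd_nonneg hA 0 n))
    (fun n t ht x hx => smul_mem_orthantImage ht hx)
    (fun n x hx => nonneg_of_mem_orthantImage (segProd_nonneg hA 0 n) hx)
    (fun n => ⟨_, ⟨1, show (0 : ι → ℝ) ≤ 1 from zero_le_one, rfl⟩,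
      segProd_mulVec_pos hA hrow 0 n fun _ => one_pos⟩)
    fun c hc => ?_
  · rw [← segProd_mul_segProd A n.zero_le n.le_succ]
    exact orthantImage_mul_subset _ (segProd_nonneg hA n (n + 1))
  · obtain ⟨m, hm⟩ := (hθ.eventually_lt_const hc).exists
    exact ⟨k m, fun u hu v hv =>
      (crossRatioLE_of_mem_orthantImage_segProd hA hκ hB hjk hkj hprod m hu hv).mono hm.le
        (nonneg_of_mem_orthantImage (segProd_nonneg hA 0 _) hu)
        (nonneg_of_mem_orthantImage (segProd_nonneg hA 0 _) hv)⟩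

end Furstenberg

/-- Furstenberg's theorem: if a sequence of non-negative integer matrices (with no zero
row) contains infinitely many disjoint occurrences of a fixed positive block `B`, then the
nested cones `M_0 M_1 ⋯ M_{n-1} ℝ_+^d` intersect in a single half-line `ℝ_+ f` directed by
a positive vector `f`. -/
theorem furstenberg_cone_contraction (d : ℕ)
    (M : ℕ → Matrix (Fin d) (Fin d) ℕ)
    (hrow : ∀ n i, ∃ l, 0 < M n i l)
    (B : Matrix (Fin d) (Fin d) ℕ) (hB : ∀ i j, 0 < B i j)
    (j k : ℕ → ℕ)
    (hjk : ∀ m, j m < k m) (hkj : ∀ m, k m ≤ j (m + 1))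
    (hprod : ∀ m, ((List.range' (j m) (k m - j m)).map M).prod = B) :
    ∃ f : Fin d → ℝ, (∀ i, 0 < f i) ∧
      (⋂ n : ℕ,
        (fun x => ((((List.range n).map M).prod).map (Nat.cast : ℕ → ℝ)).mulVec x) ''
          {x : Fin d → ℝ | ∀ i, 0 ≤ x i}) =
      {x : Fin d → ℝ | ∃ t : ℝ, 0 ≤ t ∧ x = t • f} := by
  rcases isEmpty_or_nonempty (Fin d) with hd | hd
  · refine ⟨0, isEmptyElim, Set.ext fun x => iff_of_true ?_ ⟨0, le_rfl, Subsingleton.elim _ _⟩⟩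
    exact Set.mem_iInter.2 fun n => ⟨0, isEmptyElim, Subsingleton.elim _ _⟩
  let A : ℕ → Matrix (Fin d) (Fin d) ℝ := fun n => (M n).map (Nat.cast : ℕ → ℝ)
  have hcast : ∀ a b,
      ((List.range' a (b - a)).map M).prod.map (Nat.cast : ℕ → ℝ) = segProd A a b := fun a b =>
    (map_list_prod (Nat.castRingHom ℝ).mapMatrix _).trans (by rw [List.map_map]; rfl)
  have hP : ∀ n, ((List.range n).map M).prod.map (Nat.cast : ℕ → ℝ) = segProd A 0 n := fun n => by
    rw [List.range_eq_range', ← hcast, Nat.sub_zero]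
  obtain ⟨κ, hκ, hBκ⟩ :=
    exists_crossRatioLE_cols (B := B.map (Nat.cast : ℕ → ℝ)) fun i l => Nat.cast_pos.2 (hB i l)
  simp only [hP]
  exact exists_iInter_orthantImage_segProd_eq_ray (fun n i l => Nat.cast_nonneg _)
    (fun n i => (hrow n i).imp fun l hl => Nat.cast_pos.2 hl) hκ hBκ hjk hkj
    fun m => by rw [← hcast, hprod]
end

section
/- Let M be a d×d matrix all of whose entries are positive. Then M is a strict contraction of the Hilbert projective metric on the interior of the positive cone: there exists 0 ≤ c < 1 such that for all x, y in the interior of ℝ_+^d, d_H(Mx, My) ≤ c·d_H(x, y), where d_H(x,y) = log( max_i(x_i/y_i) · max_i(y_i/x_i) ) is the Hilbert metric. -/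
open Finset Real

lemma key_avg {ι : Type*} [Fintype ι] [Nonempty ι] [DecidableEq ι] (w w' r : ι → ℝ) (lam α β : ℝ)
    (hl : 1 ≤ lam) (hα : 0 < α) (hαβ : α ≤ β)
    (hw : ∀ j, 0 ≤ w j) (hw' : ∀ j, 0 ≤ w' j)
    (hsw : ∑ j, w j = 1) (hsw' : ∑ j, w' j = 1)
    (h1 : ∀ j, w j ≤ lam * w' j) (h2 : ∀ j, w' j ≤ lam * w j)
    (hr1 : ∀ j, α ≤ r j) (hr2 : ∀ j, r j ≤ β) :
    (∑ j, w j * r j) * (β + lam * α) ≤ (lam * β + α) * (∑ j, w' j * r j) := by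
  have hDpos : (0:ℝ) < β + lam * α := by nlinarith
  have hNpos : (0:ℝ) < lam * β + α := by nlinarith
  set c : ι → ℝ := fun j => (β + lam * α) * w j - (lam * β + α) * w' j with hc
  set S : Finset ι := Finset.univ.filter (fun j => 0 < c j) with hS
  set p := ∑ j ∈ S, w' j with hp
  set q := ∑ j ∈ S, w j with hq
  have hp0 : 0 ≤ p := Finset.sum_nonneg fun j _ => hw' j
  have hq1 : q ≤ 1 := by
    rw [← hsw]
    exact Finset.sum_le_sum_of_subset_of_nonneg (Finset.subset_univ S) (fun j _ _ => hw j)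
  have hp1 : p ≤ 1 := by
    rw [← hsw']
    exact Finset.sum_le_sum_of_subset_of_nonneg (Finset.subset_univ S) (fun j _ _ => hw' j)
  have hcompl_w : ∑ j ∈ Sᶜ, w j = 1 - q := by
    have := Finset.sum_add_sum_compl S w
    rw [hsw] at this; linarith
  have hcompl_w' : ∑ j ∈ Sᶜ, w' j = 1 - p := by
    have := Finset.sum_add_sum_compl S w'
    rw [hsw'] at this; linarith
  have hcomp : 1 - p ≤ lam * (1 - q) := by
    have h₁ : ∑ j ∈ Sᶜ, w' j ≤ ∑ j ∈ Sᶜ, lam * w j := Finset.sum_le_sum fun j _ => h2 j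
    rw [hcompl_w', ← Finset.mul_sum, hcompl_w] at h₁
    exact h₁
  have hSsum : ∑ j ∈ S, c j = (β + lam * α) * q - (lam * β + α) * p := by
    rw [hc]
    rw [Finset.sum_sub_distrib, ← Finset.mul_sum, ← Finset.mul_sum]
  have hScle : ∑ j ∈ S, c j ≤ (lam - 1) * α := by
    rcases le_or_gt (p * (lam + 1)) 1 with hcase | hcase
    · have hterm : ∀ j ∈ S, c j ≤ (lam ^ 2 - 1) * α * w' j := by
        intro j _
        have h1j := h1 j
        have hw'j := hw' j
        simp only [hc]
        nlinarith
      calc ∑ j ∈ S, c j ≤ ∑ j ∈ S, (lam ^ 2 - 1) * α * w' j := Finset.sum_le_sum hterm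
        _ = (lam ^ 2 - 1) * α * p := by rw [← Finset.mul_sum]
        _ ≤ (lam - 1) * α := by
            nlinarith [mul_nonneg (mul_nonneg (show (0:ℝ) ≤ lam - 1 by linarith) hα.le)
              (show (0:ℝ) ≤ 1 - p * (lam + 1) by linarith)]
    · rw [hSsum]
      have hlam0 : (0:ℝ) < lam := by linarith
      have hq2 : lam * q ≤ lam - 1 + p := by linarith
      have h3 : lam * ((β + lam * α) * q - (lam * β + α) * p) ≤ lam * ((lam - 1) * α) := by
        nlinarith [mul_le_mul_of_nonneg_left hq2 hDpos.le,
          mul_nonneg (mul_nonneg (show (0:ℝ) ≤ lam - 1 by linarith) (show (0:ℝ) ≤ β by linarith))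
            (show (0:ℝ) ≤ p * (lam + 1) - 1 by linarith)]
      exact le_of_mul_le_mul_left h3 hlam0
  have htot : ∑ j, c j = (1 - lam) * (β - α) := by
    rw [hc]
    rw [Finset.sum_sub_distrib, ← Finset.mul_sum, ← Finset.mul_sum, hsw, hsw']
    ring
  have hsplit : ∑ j, c j * r j ≤ 0 := by
    have hA : ∑ j ∈ S, c j * r j ≤ ∑ j ∈ S, c j * β := by
      apply Finset.sum_le_sum
      intro j hj
      have hcj : 0 < c j := (Finset.mem_filter.mp hj).2
      exact mul_le_mul_of_nonneg_left (hr2 j) hcj.le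
    have hB : ∑ j ∈ Sᶜ, c j * r j ≤ ∑ j ∈ Sᶜ, c j * α := by
      apply Finset.sum_le_sum
      intro j hj
      have hj' : ¬ 0 < c j := by
        have := Finset.mem_compl.mp hj
        simp only [hS, Finset.mem_filter, Finset.mem_univ, true_and] at this
        exact this
      exact mul_le_mul_of_nonpos_left (hr1 j) (not_lt.mp hj')
    have hcompl_c : ∑ j ∈ Sᶜ, c j = (1 - lam) * (β - α) - ∑ j ∈ S, c j := by
      have := Finset.sum_add_sum_compl S c
      rw [htot] at this; linarith
    have : ∑ j, c j * r j = ∑ j ∈ S, c j * r j + ∑ j ∈ Sᶜ, c j * r j :=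
      (Finset.sum_add_sum_compl S _).symm
    rw [this]
    have e1 : ∑ j ∈ S, c j * β = (∑ j ∈ S, c j) * β := by rw [← Finset.sum_mul]
    have e2 : ∑ j ∈ Sᶜ, c j * α = (∑ j ∈ Sᶜ, c j) * α := by rw [← Finset.sum_mul]
    have hScnn : ∑ j ∈ S, c j ≥ 0 := Finset.sum_nonneg fun j hj => ((Finset.mem_filter.mp hj).2).le
    nlinarith [hA, hB, e1, e2, hcompl_c, hScle]
  have hfin : ∑ j, c j * r j = (β + lam * α) * (∑ j, w j * r j) - (lam * β + α) * (∑ j, w' j * r j) := by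
    rw [Finset.mul_sum, Finset.mul_sum, ← Finset.sum_sub_distrib]
    apply Finset.sum_congr rfl
    intro j _
    simp only [hc]; ring
  rw [hfin] at hsplit
  linarith

lemma log_ratio_le (lam : ℝ) (hl : 1 ≤ lam) {t : ℝ} (ht : 1 ≤ t) :
    Real.log ((lam * t + 1) / (t + lam)) ≤ (lam - 1) / (lam + 1) * Real.log t := by
  set c := (lam - 1) / (lam + 1) with hcdef
  set f : ℝ → ℝ := fun s => c * Real.log s - Real.log (lam * s + 1) + Real.log (s + lam) with hf
  have hderiv : ∀ s : ℝ, 1 ≤ s →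
      HasDerivAt f (c * s⁻¹ - lam / (lam * s + 1) + 1 / (s + lam)) s := by
    intro s hs
    have hs0 : (0:ℝ) < s := by linarith
    have h2 : (0:ℝ) < lam * s + 1 := by nlinarith
    have h3 : (0:ℝ) < s + lam := by linarith
    have d1 : HasDerivAt (fun s : ℝ => c * Real.log s) (c * s⁻¹) s :=
      (Real.hasDerivAt_log hs0.ne').const_mul c
    have d2 : HasDerivAt (fun s : ℝ => Real.log (lam * s + 1)) (lam / (lam * s + 1)) s := by
      have := (((hasDerivAt_id s).const_mul lam).add_const 1).log h2.ne'
      simpa using this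
    have d3 : HasDerivAt (fun s : ℝ => Real.log (s + lam)) (1 / (s + lam)) s := by
      have := ((hasDerivAt_id s).add_const lam).log h3.ne'
      simpa using this
    exact (d1.sub d2).add d3
  have hmono : MonotoneOn f (Set.Ici 1) := by
    apply monotoneOn_of_deriv_nonneg (convex_Ici 1)
    · exact fun s hs => (hderiv s hs).continuousAt.continuousWithinAt
    · intro s hs
      rw [interior_Ici] at hs
      exact ((hderiv s (le_of_lt hs)).differentiableAt).differentiableWithinAt
    · intro s hs
      rw [interior_Ici] at hs
      have hs1 : (1:ℝ) < s := hs
      have hs0 : (0:ℝ) < s := by linarith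
      have h2 : (0:ℝ) < lam * s + 1 := by nlinarith
      have h3 : (0:ℝ) < s + lam := by linarith
      rw [(hderiv s hs1.le).deriv]
      have hid : c * s⁻¹ - lam / (lam * s + 1) + 1 / (s + lam)
          = ((lam - 1) * lam * (s - 1) ^ 2) / ((lam + 1) * s * ((lam * s + 1) * (s + lam))) := by
        rw [hcdef]
        field_simp
        ring
      rw [hid]
      have hl1 : (0:ℝ) < lam + 1 := by linarith
      exact div_nonneg (mul_nonneg (mul_nonneg (by linarith : (0:ℝ) ≤ lam - 1) (by linarith : (0:ℝ) ≤ lam)) (sq_nonneg (s - 1)))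
        (mul_pos (mul_pos hl1 hs0) (mul_pos h2 h3)).le
  have h0 : f 1 = 0 := by
    simp only [hf, Real.log_one, mul_one, mul_zero]
    rw [add_comm lam 1]
    ring
  have hft := hmono (Set.self_mem_Ici) (Set.mem_Ici.mpr ht) ht
  rw [h0] at hft
  have h2 : (0:ℝ) < lam * t + 1 := by nlinarith
  have h3 : (0:ℝ) < t + lam := by linarith
  rw [Real.log_div h2.ne' h3.ne']
  simp only [hf] at hft
  linarith

/-- The Hilbert projective metric on the open positive cone of `ℝ^d`:
`d_H(x,y) = log( (max_i x_i/y_i) ⬝ (max_i y_i/x_i) )`. -/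
noncomputable def hilbertDist (d : ℕ) (x y : Fin d → ℝ) : ℝ :=
  Real.log ((⨆ i, x i / y i) * (⨆ i, y i / x i))

/-- Birkhoff's theorem: a matrix with positive entries is a strict contraction of the
Hilbert projective metric on the interior of the positive cone. -/
theorem positive_matrix_hilbert_contraction (d : ℕ) (hd : 0 < d)
    (M : Matrix (Fin d) (Fin d) ℝ) (hM : ∀ i j, 0 < M i j) :
    ∃ c : ℝ, 0 ≤ c ∧ c < 1 ∧
      ∀ x y : Fin d → ℝ, (∀ i, 0 < x i) → (∀ i, 0 < y i) →
        hilbertDist d (M.mulVec x) (M.mulVec y) ≤ c * hilbertDist d x y := by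
  haveI : Nonempty (Fin d) := ⟨⟨0, hd⟩⟩
  have i0 : Fin d := Classical.arbitrary _
  have huniv : (Finset.univ : Finset (Fin d × Fin d)).Nonempty := Finset.univ_nonempty
  set K := Finset.univ.sup' huniv (fun p : Fin d × Fin d => M p.1 p.2) with hKdef
  set m := Finset.univ.inf' huniv (fun p : Fin d × Fin d => M p.1 p.2) with hmdef
  have hmpos : 0 < m := by
    rw [hmdef, Finset.lt_inf'_iff]
    exact fun p _ => hM p.1 p.2
  have hmle : ∀ i j, m ≤ M i j := fun i j => Finset.inf'_le (fun p : Fin d × Fin d => M p.1 p.2) (Finset.mem_univ (i, j))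
  have hleK : ∀ i j, M i j ≤ K := fun i j => Finset.le_sup' (fun p : Fin d × Fin d => M p.1 p.2) (Finset.mem_univ (i, j))
  have hmK : m ≤ K := le_trans (hmle i0 i0) (hleK i0 i0)
  set lam := K ^ 2 / m ^ 2 with hlamdef
  have hl : 1 ≤ lam := by
    rw [hlamdef, le_div_iff₀ (by positivity)]
    nlinarith
  have hlm : lam * m ^ 2 = K ^ 2 := by
    rw [hlamdef]; field_simp
  have hlampos : 0 < lam := lt_of_lt_of_le one_pos hl
  clear_value lam
  refine ⟨(lam - 1) / (lam + 1), div_nonneg (by linarith) (by linarith),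
    (div_lt_one (by linarith)).mpr (by linarith), ?_⟩
  intro x y hx hy
  have hmv : ∀ (v : Fin d → ℝ) (i : Fin d), M.mulVec v i = ∑ j, M i j * v j := by
    intro v i
    simp [Matrix.mulVec, dotProduct]
  -- basic positivity
  have hQpos : ∀ i, 0 < M.mulVec y i := by
    intro i
    exact Finset.sum_pos (fun j _ => mul_pos (hM i j) (hy j)) Finset.univ_nonempty
  have hPpos : ∀ i, 0 < M.mulVec x i := by
    intro i
    exact Finset.sum_pos (fun j _ => mul_pos (hM i j) (hx j)) Finset.univ_nonempty
  have hsYpos : 0 < ∑ j, y j := Finset.sum_pos (fun j _ => hy j) Finset.univ_nonempty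
  have hQub : ∀ i, M.mulVec y i ≤ K * ∑ j, y j := by
    intro i
    rw [Finset.mul_sum, hmv]
    exact Finset.sum_le_sum fun j _ => mul_le_mul_of_nonneg_right (hleK i j) (hy j).le
  have hQlb : ∀ i, m * ∑ j, y j ≤ M.mulVec y i := by
    intro i
    rw [Finset.mul_sum, hmv]
    exact Finset.sum_le_sum fun j _ => mul_le_mul_of_nonneg_right (hmle i j) (hy j).le
  -- sups
  set A := ⨆ i, x i / y i with hAdef
  set B := ⨆ i, y i / x i with hBdef
  have hAle : ∀ i, x i / y i ≤ A := by
    intro i; exact hAdef ▸ le_ciSup (f := fun i => x i / y i) (Finite.bddAbove_range _) i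
  have hBle : ∀ i, y i / x i ≤ B := by
    intro i; exact hBdef ▸ le_ciSup (f := fun i => y i / x i) (Finite.bddAbove_range _) i
  have hApos : 0 < A := lt_of_lt_of_le (div_pos (hx i0) (hy i0)) (hAle i0)
  have hBpos : 0 < B := lt_of_lt_of_le (div_pos (hy i0) (hx i0)) (hBle i0)
  have ht1 : 1 ≤ A * B := by
    calc (1:ℝ) = x i0 / y i0 * (y i0 / x i0) := by
          rw [div_mul_div_comm, mul_comm (y i0) (x i0),
            div_self (mul_pos (hx i0) (hy i0)).ne']
      _ ≤ A * B := mul_le_mul (hAle i0) (hBle i0) (div_pos (hy i0) (hx i0)).le hApos.le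
  have hα : 0 < B⁻¹ := inv_pos.mpr hBpos
  have hαβ : B⁻¹ ≤ A := by
    rw [inv_eq_one_div, div_le_iff₀ hBpos]
    linarith
  have hr1 : ∀ j, B⁻¹ ≤ x j / y j := by
    intro j
    have h := inv_anti₀ (div_pos (hy j) (hx j)) (hBle j)
    rwa [inv_div] at h
  -- pairwise inequality
  have hpair : ∀ i k, (M.mulVec x i / M.mulVec y i) * (A + lam * B⁻¹) ≤
      (lam * A + B⁻¹) * (M.mulVec x k / M.mulVec y k) := by
    intro i k
    have hwle : ∀ i' k' j, M i' j * y j / M.mulVec y i' ≤ lam * (M k' j * y j / M.mulVec y k') := by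
      intro i' k' j
      rw [← mul_div_assoc, div_le_div_iff₀ (hQpos i') (hQpos k')]
      calc M i' j * y j * M.mulVec y k' ≤ K * y j * (K * ∑ l, y l) := by
            apply mul_le_mul (mul_le_mul_of_nonneg_right (hleK i' j) (hy j).le) (hQub k')
              (hQpos k').le (mul_nonneg (le_trans hmpos.le hmK) (hy j).le)
        _ = lam * (m * y j) * (m * ∑ l, y l) := by
            have e : lam * (m * y j) * (m * ∑ l, y l) = lam * m ^ 2 * (y j * ∑ l, y l) := by ring
            rw [e, hlm]; ring
        _ ≤ lam * (M k' j * y j) * M.mulVec y i' := by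
            apply mul_le_mul
            · apply mul_le_mul_of_nonneg_left
                (mul_le_mul_of_nonneg_right (hmle k' j) (hy j).le) (by linarith)
            · exact hQlb i'
            · exact (mul_pos hmpos hsYpos).le
            · exact mul_nonneg hlampos.le (mul_pos (hM k' j) (hy j)).le
    have hsumw : ∀ i', ∑ j, M i' j * y j / M.mulVec y i' = 1 := by
      intro i'
      rw [← Finset.sum_div, ← hmv]
      exact div_self (hQpos i').ne'
    have hsumwr : ∀ i', ∑ j, (M i' j * y j / M.mulVec y i') * (x j / y j)
        = M.mulVec x i' / M.mulVec y i' := by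
      intro i'
      have e : ∀ j : Fin d, (M i' j * y j / M.mulVec y i') * (x j / y j)
          = M i' j * x j / M.mulVec y i' := by
        intro j
        rw [div_mul_div_comm, show M i' j * y j * x j = M i' j * x j * y j from by ring,
          mul_div_mul_right _ _ (hy j).ne']
      rw [Finset.sum_congr rfl (fun j _ => e j), ← Finset.sum_div, ← hmv]
    have hk := key_avg (fun j => M i j * y j / M.mulVec y i)
      (fun j => M k j * y j / M.mulVec y k) (fun j => x j / y j) lam B⁻¹ A hl hα hαβ
      (fun j => (div_pos (mul_pos (hM i j) (hy j)) (hQpos i)).le)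
      (fun j => (div_pos (mul_pos (hM k j) (hy j)) (hQpos k)).le) (hsumw i) (hsumw k)
      (fun j => hwle i k j) (fun j => hwle k i j) hr1 (fun j => hAle j)
    rw [hsumwr i, hsumwr k] at hk
    exact hk
  -- combine sups
  set A' := ⨆ i, M.mulVec x i / M.mulVec y i with hA'def
  set B' := ⨆ i, M.mulVec y i / M.mulVec x i with hB'def
  have hA'pos : 0 < A' := by
    rw [hA'def]
    exact lt_of_lt_of_le (div_pos (hPpos i0) (hQpos i0))
      (le_ciSup (f := fun i => M.mulVec x i / M.mulVec y i) (Finite.bddAbove_range _) i0)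
  have hB'pos : 0 < B' := by
    rw [hB'def]
    exact lt_of_lt_of_le (div_pos (hQpos i0) (hPpos i0))
      (le_ciSup (f := fun i => M.mulVec y i / M.mulVec x i) (Finite.bddAbove_range _) i0)
  have hDpos : 0 < A + lam * B⁻¹ := add_pos hApos (mul_pos hlampos hα)
  have hNpos : 0 < lam * A + B⁻¹ := add_pos (mul_pos hlampos hApos) hα
  set C := (lam * A + B⁻¹) / (A + lam * B⁻¹) with hCdef
  have hA'le : ∀ k, A' ≤ C * (M.mulVec x k / M.mulVec y k) := by
    intro k
    rw [hA'def]
    apply ciSup_le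
    intro i
    rw [hCdef, div_mul_eq_mul_div, le_div_iff₀ hDpos]
    exact hpair i k
  have hB'le : B' ≤ C / A' := by
    rw [hB'def]
    apply ciSup_le
    intro k
    rw [le_div_iff₀ hA'pos]
    have hone : M.mulVec y k / M.mulVec x k * (M.mulVec x k / M.mulVec y k) = 1 := by
      rw [div_mul_div_comm, mul_comm (M.mulVec x k) (M.mulVec y k),
        div_self (mul_pos (hQpos k) (hPpos k)).ne']
    calc M.mulVec y k / M.mulVec x k * A'
        ≤ M.mulVec y k / M.mulVec x k * (C * (M.mulVec x k / M.mulVec y k)) :=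
          mul_le_mul_of_nonneg_left (hA'le k) (div_pos (hQpos k) (hPpos k)).le
      _ = M.mulVec y k / M.mulVec x k * (M.mulVec x k / M.mulVec y k) * C := by ring
      _ = C := by rw [hone, one_mul]
  have hA'B' : A' * B' ≤ C := by
    calc A' * B' ≤ A' * (C / A') := mul_le_mul_of_nonneg_left hB'le hA'pos.le
      _ = C := by rw [mul_div_assoc', mul_comm A' C, mul_div_assoc, div_self hA'pos.ne', mul_one]
  have hCeq : C = (lam * (A * B) + 1) / (A * B + lam) := by
    rw [hCdef, div_eq_div_iff hDpos.ne' (show (A * B + lam) ≠ 0 by nlinarith)]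
    field_simp [hBpos.ne']
  show Real.log (A' * B') ≤ (lam - 1) / (lam + 1) * Real.log (A * B)
  calc Real.log (A' * B') ≤ Real.log C :=
        Real.log_le_log (mul_pos hA'pos hB'pos) hA'B'
    _ = Real.log ((lam * (A * B) + 1) / (A * B + lam)) := by rw [hCeq]
    _ ≤ (lam - 1) / (lam + 1) * Real.log (A * B) := log_ratio_le lam hl ht1
end
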